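/- arXiv:2008.12935 — 9 statements merged into one kernel-verified Lean document; each statement's English description precedes it below -/
import Mathlib

section
/- For the complete multipartite graph K_{ 1,2,...,2 } on n = 2r-1 vertices (one part of size 1 and r-1 parts of size 2), the distance spectral radius equals (n-1+√((n-1)(n+3)))/2. -/
/-!
The distance matrix of `K_{1,2,…,2}` is `J - I + P`, where `P` swaps the two vertices of each
part of size 2. For an eigenvector `x` with eigenvalue `μ ≠ -2`, comparing the eigenvalue
equations at the two vertices of a part shows that `x` is constant on parts; then
`μ x_u = ∑ x` away from the singleton part `{0}` and `(μ + 1) x_0 = ∑ x`. If `μ > 0` this forces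
`μ² = (n - 1)(μ + 1)`, whose larger root `θ` is attained by the vector equal to `θ` at `0` and to
`θ + 1` elsewhere.
-/

open SimpleGraph Matrix Finset BigOperators

/-- The distance matrix of a graph on `Fin n`, with real entries `d(u,v)`. -/
noncomputable def distMatrix {n : ℕ} (G : SimpleGraph (Fin n)) : Matrix (Fin n) (Fin n) ℝ :=
  fun u v => (G.dist u v : ℝ)

lemma distMatrix_isHermitian {n : ℕ} (G : SimpleGraph (Fin n)) :
    (distMatrix G).IsHermitian := by
  unfold Matrix.IsHermitian
  ext u v
  simp [distMatrix, Matrix.conjTranspose_apply, SimpleGraph.dist_comm]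

/-- The distance spectral radius: the largest eigenvalue of the distance matrix. -/
noncomputable def lambda1 {n : ℕ} (G : SimpleGraph (Fin n)) : ℝ :=
  ⨆ i, (distMatrix_isHermitian G).eigenvalues i

/-- The transmission of a vertex: the sum of distances to all other vertices. -/
noncomputable def transmission {n : ℕ} (G : SimpleGraph (Fin n)) (v : Fin n) : ℕ :=
  ∑ u, G.dist v u

/-- The maximum transmission. -/
noncomputable def Dmax {n : ℕ} (G : SimpleGraph (Fin n)) : ℕ :=
  Finset.univ.sup (transmission G)

/-- The minimum transmission. -/
noncomputable def Dmin {n : ℕ} (G : SimpleGraph (Fin n)) : ℕ :=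
  sInf (Set.range (transmission G))

/-- The Wiener index: half the sum of all transmissions. -/
noncomputable def wiener {n : ℕ} (G : SimpleGraph (Fin n)) : ℝ :=
  (∑ v, (transmission G v : ℝ)) / 2

/-- The complete multipartite graph `K_{1,2,…,2}` on `n = 2r-1` vertices:
vertex `0` forms the part of size 1, and `{2i-1, 2i}` are the parts of size 2. -/
def K122 (n : ℕ) : SimpleGraph (Fin n) where
  Adj u v := u ≠ v ∧ ¬(u.val ≠ 0 ∧ v.val ≠ 0 ∧ (u.val + 1) / 2 = (v.val + 1) / 2)
  symm := by
    constructor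
    intro u v h
    exact ⟨h.1.symm, fun hc => h.2 ⟨hc.2.1, hc.1, hc.2.2.symm⟩⟩
  loopless := by
    constructor
    intro u h
    exact h.1 rfl

theorem Matrix.mem_spectrum_iff_exists_mulVec_eq_smul {ι K : Type*} [Fintype ι] [DecidableEq ι]
    [Field K] (A : Matrix ι ι K) (μ : K) :
    μ ∈ spectrum K A ↔ ∃ x ≠ 0, A *ᵥ x = μ • x := by
  rw [← spectrum_toLin', ← Module.End.hasEigenvalue_iff_mem_spectrum,
    Module.End.hasEigenvalue_iff, Submodule.ne_bot_iff]
  simp only [Module.End.mem_eigenspace_iff, toLin'_apply]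
  exact ⟨fun ⟨x, h, hx⟩ => ⟨x, hx, h⟩, fun ⟨x, hx, h⟩ => ⟨x, h, hx⟩⟩

lemma lambda1_eq_sSup_spectrum {n : ℕ} (G : SimpleGraph (Fin n)) :
    lambda1 G = sSup (spectrum ℝ (distMatrix G)) := by
  rw [lambda1, (distMatrix_isHermitian G).spectrum_real_eq_range_eigenvalues, sSup_range]

lemma SimpleGraph.dist_eq_two_iff {V : Type*} {G : SimpleGraph V} {u v : V} :
    G.dist u v = 2 ↔ u ≠ v ∧ ¬G.Adj u v ∧ (G.commonNeighbors u v).Nonempty := by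
  rw [dist, ENat.toNat_eq_iff two_ne_zero]
  exact edist_eq_two_iff

section K122

variable {n : ℕ}

lemma K122_adj_iff {u v : Fin n} : (K122 n).Adj u v ↔ (u.val + 1) / 2 ≠ (v.val + 1) / 2 := by
  simp only [K122, ne_eq, Fin.ext_iff]
  omega

lemma K122_dist_of_ne_of_pair_eq {u v : Fin n} (huv : u ≠ v)
    (hpair : (u.val + 1) / 2 = (v.val + 1) / 2) : (K122 n).dist u v = 2 := by
  have := Fin.val_ne_of_ne huv
  refine dist_eq_two_iff.mpr ⟨huv, K122_adj_iff.not_left.mpr hpair, ⟨0, u.pos⟩, ?_⟩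
  simp only [mem_commonNeighbors, K122_adj_iff]
  omega

lemma K122_dist_of_pair_ne {u v : Fin n} (hpair : (u.val + 1) / 2 ≠ (v.val + 1) / 2) :
    (K122 n).dist u v = 1 :=
  dist_eq_one_iff_adj.mpr (K122_adj_iff.mpr hpair)

lemma exists_K122_partner (hn : Odd n) {u : Fin n} (hu : u.val ≠ 0) :
    ∃ w : Fin n, w ≠ u ∧ (w.val + 1) / 2 = (u.val + 1) / 2 := by
  obtain ⟨k, rfl⟩ := hn
  have := u.isLt
  by_cases hodd : u.val % 2 = 1
  · exact ⟨⟨u.val + 1, by omega⟩, by simp [Fin.ext_iff], by simp only; omega⟩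
  · exact ⟨⟨u.val - 1, by omega⟩, by simp [Fin.ext_iff]; omega, by simp only; omega⟩

lemma distMatrix_K122_mulVec_of_val_eq_zero {u : Fin n} (hu : u.val = 0) (x : Fin n → ℝ) :
    (distMatrix (K122 n) *ᵥ x) u = ∑ v, x v - x u := by
  have hrow : ∀ v, distMatrix (K122 n) u v = 1 - if v = u then 1 else 0 := by
    intro v
    by_cases hvu : v = u
    · simp [distMatrix, hvu]
    · have : (u.val + 1) / 2 ≠ (v.val + 1) / 2 := by rw [Fin.ext_iff] at hvu; omega
      simp [distMatrix, hvu, K122_dist_of_pair_ne this]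
  simp [mulVec, dotProduct, hrow, sub_mul, sum_sub_distrib]

lemma distMatrix_K122_mulVec_of_partner {u w : Fin n} (hwu : w ≠ u)
    (hpair : (w.val + 1) / 2 = (u.val + 1) / 2) (x : Fin n → ℝ) :
    (distMatrix (K122 n) *ᵥ x) u = ∑ v, x v - x u + x w := by
  have hrow : ∀ v, distMatrix (K122 n) u v =
      1 - (if v = u then 1 else 0) + (if v = w then 1 else 0) := by
    intro v
    by_cases hvu : v = u
    · simp [distMatrix, hvu, hwu.symm]
    by_cases hvw : v = w
    · subst hvw
      norm_num [distMatrix, hwu, K122_dist_of_ne_of_pair_eq (Ne.symm hwu) hpair.symm]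
    · have : (u.val + 1) / 2 ≠ (v.val + 1) / 2 := by
        simp only [ne_eq, Fin.ext_iff] at hvu hvw hwu; omega
      simp [distMatrix, hvu, hvw, K122_dist_of_pair_ne this]
  simp [mulVec, dotProduct, hrow, add_mul, sub_mul, sum_add_distrib,
    sum_sub_distrib]

end K122

noncomputable def theta (n : ℕ) : ℝ :=
  ((n : ℝ) - 1 + Real.sqrt (((n : ℝ) - 1) * ((n : ℝ) + 3))) / 2

lemma theta_nonneg {n : ℕ} (hn : 1 ≤ n) : 0 ≤ theta n := by
  have : (1 : ℝ) ≤ n := by exact_mod_cast hn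
  unfold theta
  positivity

lemma theta_sq {n : ℕ} (hn : 1 ≤ n) : theta n ^ 2 = ((n : ℝ) - 1) * (theta n + 1) := by
  have : (1 : ℝ) ≤ n := by exact_mod_cast hn
  have hsq := Real.sq_sqrt (by positivity : (0 : ℝ) ≤ ((n : ℝ) - 1) * ((n : ℝ) + 3))
  unfold theta
  linear_combination hsq / 4

lemma le_theta_of_sq_eq {n : ℕ} {μ : ℝ} (hμ : μ ^ 2 = ((n : ℝ) - 1) * (μ + 1)) :
    μ ≤ theta n := by
  have hsq : (2 * μ - ((n : ℝ) - 1)) ^ 2 = ((n : ℝ) - 1) * ((n : ℝ) + 3) := by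
    linear_combination 4 * hμ
  have := (le_abs_self _).trans (Real.abs_le_sqrt hsq.le)
  unfold theta
  linarith

section K122Eigen

variable {n : ℕ} {x : Fin n → ℝ} {μ : ℝ}

lemma K122_eigenvalue_mul_apply_eq_sum (hn : Odd n) (h : distMatrix (K122 n) *ᵥ x = μ • x)
    (hμ : μ ≠ -2) {u : Fin n} (hu : u.val ≠ 0) : μ * x u = ∑ v, x v := by
  obtain ⟨w, hwu, hpair⟩ := exists_K122_partner hn hu
  have eu := congrFun h u
  have ew := congrFun h w
  rw [distMatrix_K122_mulVec_of_partner hwu hpair, Pi.smul_apply, smul_eq_mul] at eu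
  rw [distMatrix_K122_mulVec_of_partner hwu.symm hpair.symm, Pi.smul_apply, smul_eq_mul] at ew
  have hxw : x w = x u := by
    have : (μ + 2) * (x u - x w) = 0 := by linear_combination ew - eu
    have := (mul_eq_zero.mp this).resolve_left (by contrapose! hμ; linarith)
    linarith
  linarith

lemma K122_eigenvalue_sq (hn : Odd n) (hx : x ≠ 0) (h : distMatrix (K122 n) *ᵥ x = μ • x)
    (hμ : 0 < μ) : μ ^ 2 = ((n : ℝ) - 1) * (μ + 1) := by
  set s := ∑ v, x v
  let u₀ : Fin n := ⟨0, hn.pos⟩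
  have hrest : ∀ u, u ≠ u₀ → μ * x u = s := fun u hu =>
    K122_eigenvalue_mul_apply_eq_sum hn h (by linarith) (by simpa [u₀, Fin.ext_iff] using hu)
  have h₀ : (μ + 1) * x u₀ = s := by
    have := congrFun h u₀
    rw [distMatrix_K122_mulVec_of_val_eq_zero rfl, Pi.smul_apply, smul_eq_mul] at this
    linarith
  have hs : s ≠ 0 := by
    intro hs
    refine hx (funext fun u => ?_)
    by_cases hu : u = u₀
    · subst hu
      exact (mul_eq_zero.mp (h₀.trans hs)).resolve_left (by linarith)
    · exact (mul_eq_zero.mp ((hrest u hu).trans hs)).resolve_left hμ.ne'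
  have hsum : μ * (s - x u₀) = ((n : ℝ) - 1) * s := by
    have hs' : s - x u₀ = ∑ u ∈ univ.erase u₀, x u := by
      rw [sub_eq_iff_eq_add, sum_erase_add _ _ (mem_univ u₀)]
    rw [hs', mul_sum, sum_congr rfl fun u hu => hrest u (ne_of_mem_erase hu),
      sum_const, card_erase_of_mem (mem_univ _), card_univ,
      Fintype.card_fin, nsmul_eq_mul, Nat.cast_sub hn.pos, Nat.cast_one]
  have : s * (μ ^ 2 - ((n : ℝ) - 1) * (μ + 1)) = 0 := by
    linear_combination (μ + 1) * hsum + μ * h₀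
  linear_combination (mul_eq_zero.mp this).resolve_left hs

lemma K122_eigenvalue_le_theta (hn : Odd n) (hx : x ≠ 0)
    (h : distMatrix (K122 n) *ᵥ x = μ • x) : μ ≤ theta n := by
  rcases le_or_gt μ 0 with hμ | hμ
  · exact hμ.trans (theta_nonneg hn.pos)
  · exact le_theta_of_sq_eq (K122_eigenvalue_sq hn hx h hμ)

end K122Eigen

lemma exists_K122_eigenvector_theta {n : ℕ} (hn : Odd n) :
    ∃ x ≠ 0, distMatrix (K122 n) *ᵥ x = theta n • x := by
  have hθ := theta_sq hn.pos
  -- the eigenvector used for `n ≥ 3` vanishes when `n = 1`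
  obtain rfl | hn3 : n = 1 ∨ 3 ≤ n := by obtain ⟨k, rfl⟩ := hn; omega
  · have hθ1 : theta 1 = 0 := by simpa using hθ
    refine ⟨1, one_ne_zero, funext fun u => ?_⟩
    rw [distMatrix_K122_mulVec_of_val_eq_zero (Fin.val_eq_zero u), hθ1]
    simp
  set θ := theta n
  let x : Fin n → ℝ := fun u => if u.val = 0 then θ else θ + 1
  have hsum : ∑ v, x v = θ * (θ + 1) := by
    rw [← add_sum_erase _ _ (mem_univ (⟨0, by omega⟩ : Fin n)),
      sum_congr rfl fun v hv => if_neg (Fin.val_ne_iff.mpr (ne_of_mem_erase hv)),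
      sum_const, card_erase_of_mem (mem_univ _), card_univ,
      Fintype.card_fin, nsmul_eq_mul, Nat.cast_sub (by omega), Nat.cast_one]
    simp only [x, if_true]
    linear_combination -hθ
  refine ⟨x, fun h => ?_, funext fun u => ?_⟩
  · have := congrFun h ⟨1, by omega⟩
    simp only [x, one_ne_zero, if_false, Pi.zero_apply] at this
    linarith [theta_nonneg hn.pos]
  rw [Pi.smul_apply, smul_eq_mul]
  by_cases hu : u.val = 0
  · rw [distMatrix_K122_mulVec_of_val_eq_zero hu, hsum]
    simp only [x, hu, if_true]
    ring
  · obtain ⟨w, hwu, hpair⟩ := exists_K122_partner hn hu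
    have hw : w.val ≠ 0 := by rw [← Fin.val_ne_iff] at hwu; omega
    rw [distMatrix_K122_mulVec_of_partner hwu hpair, hsum]
    simp only [x, hu, hw, if_false]
    ring

theorem stmt0 (r : ℕ) (hr : 1 ≤ r) (n : ℕ) (hn : n = 2 * r - 1) :
    lambda1 (K122 n) =
      ((n : ℝ) - 1 + Real.sqrt (((n : ℝ) - 1) * ((n : ℝ) + 3))) / 2 := by
  have hodd : Odd n := ⟨r - 1, by omega⟩
  rw [lambda1_eq_sSup_spectrum]
  refine IsGreatest.csSup_eq ⟨?_, fun μ hμ => ?_⟩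
  · exact (mem_spectrum_iff_exists_mulVec_eq_smul _ _).mpr (exists_K122_eigenvector_theta hodd)
  · obtain ⟨x, hx, h⟩ := (mem_spectrum_iff_exists_mulVec_eq_smul _ _).mp hμ
    exact K122_eigenvalue_le_theta hodd hx h
end

section
/- For the complete multipartite graph K_{1,2,...,2} on n = 2r-1 vertices, the maximum vertex transmission D_max equals n, and D_max − λ₁ = (n+1−√((n-1)(n+3)))/2, where λ₁ is the distance spectral radius. -/
open SimpleGraph Matrix Finset BigOperators

/-! The graph has diameter two, vertex `0` being adjacent to all others, so `d(u,v) = 2` exactly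
for the two vertices of a part of size two. Hence the transmission is `n - 1` at `0` and `n`
elsewhere. If `μ` is the positive root of `μ (μ - (n - 1)) = n - 1`, the vector equal to
`μ - (n - 1) > 0` at `0` and to `1` elsewhere is an eigenvector of the distance matrix for `μ`;
since this matrix is nonnegative, comparing any eigenvector with this positive one
(Collatz–Wielandt) shows that no eigenvalue exceeds `μ`. -/

theorem Matrix.abs_le_of_mem_spectrum_of_mulVec_le {ι : Type*} [Fintype ι] [DecidableEq ι]
    {A : Matrix ι ι ℝ} (hA : ∀ i j, 0 ≤ A i j) {v : ι → ℝ} (hv : ∀ i, 0 < v i) {μ : ℝ}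
    (hAv : ∀ i, (A *ᵥ v) i ≤ μ * v i) {θ : ℝ} (hθ : θ ∈ spectrum ℝ A) : |θ| ≤ μ := by
  rw [← Matrix.spectrum_toLin', ← Module.End.hasEigenvalue_iff_mem_spectrum] at hθ
  obtain ⟨w, hw⟩ := hθ.exists_hasEigenvector
  have hAw : A *ᵥ w = θ • w := by simpa using hw.apply_eq_smul
  obtain ⟨k, hk⟩ := Function.ne_iff.mp hw.2
  -- compare `w` with `v` at an index where `|w i| / v i` is largest
  obtain ⟨i, -, hi⟩ := exists_max_image univ (fun j => |w j| / v j) ⟨k, mem_univ k⟩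
  set c := |w i| / v i
  have hwc : ∀ j, |w j| ≤ c * v j := fun j => (div_le_iff₀ (hv j)).mp (hi j (mem_univ j))
  have hc : 0 < c := pos_of_mul_pos_left ((abs_pos.mpr hk).trans_le (hwc k)) (hv k).le
  have hci : c * v i = |w i| := div_mul_cancel₀ _ (hv i).ne'
  have hwi : 0 < |w i| := hci ▸ mul_pos hc (hv i)
  refine le_of_mul_le_mul_right ?_ hwi
  calc |θ| * |w i| = |(A *ᵥ w) i| := by rw [hAw, Pi.smul_apply, smul_eq_mul, abs_mul]
    _ ≤ ∑ j, A i j * |w j| := by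
        refine (abs_sum_le_sum_abs _ _).trans_eq (sum_congr rfl fun j _ => ?_)
        rw [abs_mul, abs_of_nonneg (hA i j)]
    _ ≤ ∑ j, A i j * (c * v j) :=
        sum_le_sum fun j _ => mul_le_mul_of_nonneg_left (hwc j) (hA i j)
    _ = c * (A *ᵥ v) i := by
        simp only [mulVec, dotProduct, mul_sum]
        exact sum_congr rfl fun j _ => by ring
    _ ≤ c * (μ * v i) := mul_le_mul_of_nonneg_left (hAv i) hc.le
    _ = μ * |w i| := by rw [← hci]; ring

theorem Matrix.IsHermitian.iSup_eigenvalues_eq_of_pos_eigenvector {ι : Type*} [Fintype ι]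
    [DecidableEq ι] [Nonempty ι] {A : Matrix ι ι ℝ} (hA : A.IsHermitian)
    (hnonneg : ∀ i j, 0 ≤ A i j) {v : ι → ℝ} (hv : ∀ i, 0 < v i) {μ : ℝ}
    (hAv : A *ᵥ v = μ • v) : ⨆ i, hA.eigenvalues i = μ := by
  have hμ : μ ∈ spectrum ℝ A := by
    rw [← Matrix.spectrum_toLin', ← Module.End.hasEigenvalue_iff_mem_spectrum]
    refine Module.End.hasEigenvalue_of_hasEigenvector (x := v) ⟨?_, ?_⟩
    · simpa [Module.End.mem_eigenspace_iff] using hAv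
    · obtain ⟨i⟩ := ‹Nonempty ι›
      exact Function.ne_iff.mpr ⟨i, (hv i).ne'⟩
  obtain ⟨j, rfl⟩ : μ ∈ Set.range hA.eigenvalues := hA.spectrum_real_eq_range_eigenvalues ▸ hμ
  refine le_antisymm (ciSup_le fun i => ?_) (le_ciSup (Set.finite_range _).bddAbove j)
  exact (le_abs_self _).trans <| abs_le_of_mem_spectrum_of_mulVec_le hnonneg hv
    (fun k => by rw [hAv]; rfl) (hA.eigenvalues_mem_spectrum_real i)

theorem SimpleGraph.dist_eq_of_commonNeighbors_nonempty {V : Type*} [DecidableEq V]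
    {G : SimpleGraph V} [DecidableRel G.Adj]
    (hdiam : ∀ u v, u ≠ v → ¬G.Adj u v → (G.commonNeighbors u v).Nonempty) (u v : V) :
    G.dist u v = (if u ≠ v then 1 else 0) + (if u ≠ v ∧ ¬G.Adj u v then 1 else 0) := by
  by_cases huv : u = v
  · simp [huv]
  by_cases hadj : G.Adj u v
  · simp [huv, hadj]
  · have h2 : G.edist u v = 2 := edist_eq_two_iff.mpr ⟨huv, hadj, hdiam u v huv hadj⟩
    simp [huv, hadj, SimpleGraph.dist, h2]

theorem transmission_eq_of_commonNeighbors_nonempty {n : ℕ} {G : SimpleGraph (Fin n)}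
    [DecidableRel G.Adj]
    (hdiam : ∀ u v, u ≠ v → ¬G.Adj u v → (G.commonNeighbors u v).Nonempty) (v : Fin n) :
    transmission G v = (n - 1) + #{w | v ≠ w ∧ ¬G.Adj v w} := by
  simp only [transmission, G.dist_eq_of_commonNeighbors_nonempty hdiam v, sum_add_distrib,
    sum_boole, Nat.cast_id]
  congr 1
  rw [filter_ne, card_erase_of_mem (mem_univ v), card_univ, Fintype.card_fin]

theorem distMatrix_mulVec_ite {n : ℕ} (G : SimpleGraph (Fin n)) (c : Fin n) (a : ℝ) (u : Fin n) :
    (distMatrix G *ᵥ fun w => if w = c then a else 1) u =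
      transmission G u + (a - 1) * G.dist u c := by
  calc ∑ w, (G.dist u w : ℝ) * (if w = c then a else 1)
      = ∑ w, ((G.dist u w : ℝ) + if w = c then (a - 1) * G.dist u c else 0) :=
        sum_congr rfl fun w _ => by split_ifs with h <;> [subst h; skip] <;> ring
    _ = _ := by rw [sum_add_distrib, sum_ite_eq']; simp [transmission]

instance (n : ℕ) : DecidableRel (K122 n).Adj := fun u v =>
  inferInstanceAs (Decidable (u ≠ v ∧ ¬(u.val ≠ 0 ∧ v.val ≠ 0 ∧ (u.val + 1) / 2 = (v.val + 1) / 2)))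

section K122

variable {n : ℕ} [NeZero n]

theorem K122_zero_adj {v : Fin n} : (K122 n).Adj 0 v ↔ v ≠ 0 := by
  change (0 : Fin n) ≠ v ∧ ¬((0 : Fin n).val ≠ 0 ∧ _) ↔ _
  simp [ne_comm]

theorem K122_commonNeighbors_nonempty (u v : Fin n) (huv : u ≠ v) (hadj : ¬(K122 n).Adj u v) :
    ((K122 n).commonNeighbors u v).Nonempty := by
  have hu : u ≠ 0 := by rintro rfl; exact hadj (K122_zero_adj.mpr huv.symm)
  have hv : v ≠ 0 := by rintro rfl; exact hadj ((K122_zero_adj.mpr hu).symm)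
  exact ⟨0, (K122 n).mem_commonNeighbors.mpr
    ⟨(K122_zero_adj.mpr hu).symm, (K122_zero_adj.mpr hv).symm⟩⟩

theorem card_filter_not_adj_K122 (hn : Odd n) (u : Fin n) :
    #{w | u ≠ w ∧ ¬(K122 n).Adj u w} = if u = 0 then 0 else 1 := by
  split_ifs with hu
  · subst hu
    exact card_eq_zero.mpr <|
      filter_eq_empty_iff.mpr fun w _ h => h.2 (K122_zero_adj.mpr (Ne.symm h.1))
  · have hu' : u.val ≠ 0 := fun h => hu (Fin.ext (by rw [h, Fin.val_zero]))
    have hodd := Nat.odd_iff.mp hn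
    have hlt := u.isLt
    let partner : Fin n := ⟨if u.val % 2 = 1 then u.val + 1 else u.val - 1, by split_ifs <;> omega⟩
    refine card_eq_one.mpr ⟨partner, ?_⟩
    ext w
    simp only [K122, partner, mem_filter, mem_univ, true_and, mem_singleton, Fin.ext_iff, ne_eq]
    split_ifs <;> omega

theorem transmission_K122 (hn : Odd n) (u : Fin n) :
    transmission (K122 n) u = if u = 0 then n - 1 else n := by
  rw [transmission_eq_of_commonNeighbors_nonempty K122_commonNeighbors_nonempty,
    card_filter_not_adj_K122 hn]
  have : 1 ≤ n := NeZero.one_le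
  split_ifs <;> omega

theorem Dmax_K122 (hn : Odd n) (h1 : 1 < n) : Dmax (K122 n) = n := by
  refine le_antisymm (Finset.sup_le fun u _ => ?_) ?_
  · rw [transmission_K122 hn]
    split_ifs <;> omega
  · have hne : (⟨1, h1⟩ : Fin n) ≠ 0 := fun h => one_ne_zero (congrArg Fin.val h)
    have h : transmission (K122 n) ⟨1, h1⟩ = n := by rw [transmission_K122 hn, if_neg hne]
    exact h.symm.le.trans (le_sup (f := transmission (K122 n)) (mem_univ _))

theorem distMatrix_K122_mulVec (hn : Odd n) {μ : ℝ} (hμ : μ * (μ - (n - 1)) = n - 1) :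
    distMatrix (K122 n) *ᵥ (fun w => if w = 0 then μ - (n - 1) else 1) =
      μ • (fun w => if w = 0 then μ - (n - 1) else 1) := by
  funext u
  rw [distMatrix_mulVec_ite, transmission_K122 hn]
  by_cases hu : u = 0
  · subst hu
    simp only [if_pos, dist_self, Nat.cast_zero, mul_zero, add_zero, Pi.smul_apply, smul_eq_mul]
    push_cast [Nat.cast_sub (NeZero.one_le : 1 ≤ n)]
    linarith
  · have hdist : (K122 n).dist u 0 = 1 := dist_eq_one_iff_adj.mpr (K122_zero_adj.mpr hu).symm
    simp only [hu, if_false, hdist, Pi.smul_apply, smul_eq_mul]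
    push_cast
    ring

theorem lambda1_K122 (hn : Odd n) (h1 : 1 < n) :
    lambda1 (K122 n) = ((n - 1) + √((n - 1) * (n + 3))) / 2 := by
  have h1' : (1 : ℝ) < n := by exact_mod_cast h1
  have hsq : √((n - 1) * (n + 3) : ℝ) ^ 2 = (n - 1) * (n + 3) := Real.sq_sqrt (by nlinarith)
  have hgt : (n - 1 : ℝ) < √((n - 1) * (n + 3)) := (Real.lt_sqrt (by linarith)).mpr (by nlinarith)
  set μ : ℝ := ((n - 1) + √((n - 1) * (n + 3))) / 2 with hμ_def
  have hμ : μ * (μ - (n - 1)) = n - 1 := by linear_combination hsq / 4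
  refine (distMatrix_isHermitian _).iSup_eigenvalues_eq_of_pos_eigenvector
    (fun _ _ => Nat.cast_nonneg _) (fun w => ?_) (distMatrix_K122_mulVec hn hμ)
  split_ifs
  · linarith
  · exact one_pos

end K122

theorem stmt1 (r : ℕ) (hr : 2 ≤ r) (n : ℕ) (hn : n = 2 * r - 1) :
    Dmax (K122 n) = n ∧
    (Dmax (K122 n) : ℝ) - lambda1 (K122 n) =
      ((n : ℝ) + 1 - Real.sqrt (((n : ℝ) - 1) * ((n : ℝ) + 3))) / 2 := by
  have : NeZero n := ⟨by omega⟩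
  have hodd : Odd n := ⟨r - 1, by omega⟩
  have h1 : 1 < n := by omega
  refine ⟨Dmax_K122 hodd h1, ?_⟩
  rw [Dmax_K122 hodd h1, lambda1_K122 hodd h1]
  ring
end

section
/- Let G be an (n−4)-DVDR graph on n vertices. Then the distance spectral radius of G equals (n+√(n²+4n−4))/2. -/
open SimpleGraph Matrix Finset BigOperators

/-- `G` is an `r`-DVDR graph: `G` is connected and has a (distinguished) vertex `v`
of degree `n-1` such that `G - v` is `r`-regular. -/
def IsDVDR {n : ℕ} (G : SimpleGraph (Fin n)) (r : ℕ) : Prop :=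
  G.Connected ∧ ∃ v : Fin n,
    (G.neighborSet v).ncard = n - 1 ∧
    ∀ w : ({v}ᶜ : Set (Fin n)), ((G.induce {v}ᶜ).neighborSet w).ncard = r

lemma perron_eq {n : ℕ} (hn : 0 < n) (A : Matrix (Fin n) (Fin n) ℝ) (hA : A.IsHermitian)
    (hnn : ∀ i j, 0 ≤ A i j) (x : Fin n → ℝ) (hx : ∀ i, 0 < x i)
    (lam : ℝ) (hAx : A *ᵥ x = lam • x) :
    (⨆ i, hA.eigenvalues i) = lam := by
  have hsym : ∀ i j, A j i = A i j := by
    intro i j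
    have := congrFun (congrFun hA i) j
    simpa [Matrix.conjTranspose_apply] using this
  have hT : Aᵀ = A := by
    ext i j; exact hsym i j
  -- key: x ⬝ᵥ (A *ᵥ z) = lam * (x ⬝ᵥ z)
  have key : ∀ z : Fin n → ℝ, x ⬝ᵥ (A *ᵥ z) = lam * (x ⬝ᵥ z) := by
    intro z
    rw [Matrix.dotProduct_mulVec, ← Matrix.mulVec_transpose, hT, hAx]
    simp [smul_dotProduct]
  have hbdd : BddAbove (Set.range hA.eigenvalues) := Set.Finite.bddAbove (Set.finite_range _)
  haveI : Nonempty (Fin n) := ⟨⟨0, hn⟩⟩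
  apply le_antisymm
  · apply ciSup_le
    intro i
    set μ := hA.eigenvalues i with hμ
    set y : Fin n → ℝ := ⇑(hA.eigenvectorBasis i) with hy
    have hAy : A *ᵥ y = μ • y := hA.mulVec_eigenvectorBasis i
    have hy0 : y ≠ 0 := by
      intro h
      apply hA.eigenvectorBasis.orthonormal.ne_zero i
      ext j
      exact congrFun h j
    set z : Fin n → ℝ := fun j => |y j| with hz
    have hzle : ∀ j, |μ| * z j ≤ (A *ᵥ z) j := by
      intro j
      have : |μ| * z j = |(A *ᵥ y) j| := by
        rw [hAy]; simp [hz, abs_mul]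
      rw [this]
      calc |(A *ᵥ y) j| = |∑ k, A j k * y k| := by rw [Matrix.mulVec, dotProduct]
        _ ≤ ∑ k, |A j k * y k| := Finset.abs_sum_le_sum_abs _ _
        _ = (A *ᵥ z) j := by
            apply Finset.sum_congr rfl
            intro k _
            rw [abs_mul, abs_of_nonneg (hnn j k)]
          -- reduce (A *ᵥ z) j

    have hxz : 0 < x ⬝ᵥ z := by
      obtain ⟨k, hk⟩ := Function.ne_iff.mp hy0
      apply Finset.sum_pos'
      · intro j _; exact mul_nonneg (hx j).le (abs_nonneg _)
      · exact ⟨k, Finset.mem_univ k, mul_pos (hx k) (abs_pos.mpr hk)⟩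
    have hle : |μ| * (x ⬝ᵥ z) ≤ lam * (x ⬝ᵥ z) := by
      calc |μ| * (x ⬝ᵥ z) = ∑ j, x j * (|μ| * z j) := by
            simp [dotProduct, Finset.mul_sum]; ring_nf
        _ ≤ ∑ j, x j * (A *ᵥ z) j :=
            Finset.sum_le_sum fun j _ => mul_le_mul_of_nonneg_left (hzle j) (hx j).le
        _ = x ⬝ᵥ (A *ᵥ z) := rfl
        _ = lam * (x ⬝ᵥ z) := key z
    have := le_of_mul_le_mul_right (by simpa [mul_comm] using hle) hxz
    exact (le_abs_self μ).trans this
  · -- lam is an eigenvalue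
    have hex : ∃ i, hA.eigenvalues i = lam := by
      by_contra h
      push_neg at h
      have hc : ∀ i, (⇑(hA.eigenvectorBasis i) : Fin n → ℝ) ⬝ᵥ x = 0 := by
        intro i
        have h1 : hA.eigenvalues i * (⇑(hA.eigenvectorBasis i) ⬝ᵥ x)
            = lam * (⇑(hA.eigenvectorBasis i) ⬝ᵥ x) := by
          have h2 : (A *ᵥ ⇑(hA.eigenvectorBasis i)) ⬝ᵥ x
              = ⇑(hA.eigenvectorBasis i) ⬝ᵥ (A *ᵥ x) := by
            rw [Matrix.dotProduct_mulVec, ← Matrix.mulVec_transpose, hT]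
          rw [hA.mulVec_eigenvectorBasis i] at h2
          rw [hAx] at h2
          simpa [smul_dotProduct, dotProduct_smul] using h2
        rcases mul_eq_mul_right_iff.mp h1 with h' | h'
        · exact absurd h' (h i)
        · exact h'
      have hx0 : (WithLp.equiv 2 (Fin n → ℝ)).symm x = 0 := by
        rw [← (hA.eigenvectorBasis.repr).map_eq_zero_iff]
        ext i
        rw [OrthonormalBasis.repr_apply_apply]
        simpa [PiLp.inner_apply, RCLike.inner_apply, dotProduct, mul_comm]
          using hc i
      have := congrFun (congrArg (WithLp.equiv 2 (Fin n → ℝ)) hx0) ⟨0, hn⟩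
      simp at this
      exact absurd this (hx ⟨0, hn⟩).ne'
    obtain ⟨i, hi⟩ := hex
    rw [← hi]
    exact le_ciSup hbdd i

theorem stmt2 (n : ℕ) (hn : 4 ≤ n) (G : SimpleGraph (Fin n)) (hG : IsDVDR G (n - 4)) :
    lambda1 G = ((n : ℝ) + Real.sqrt ((n : ℝ) ^ 2 + 4 * n - 4)) / 2 := by
  classical
  obtain ⟨hconn, v, hdegv, hreg⟩ := hG
  have hcompl : ({v}ᶜ : Set (Fin n)).ncard = n - 1 := by
    rw [Set.compl_eq_univ_diff, Set.ncard_diff (Set.subset_univ _), Set.ncard_univ,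
      Set.ncard_singleton, Nat.card_eq_fintype_card, Fintype.card_fin]
  have hnbrv : G.neighborSet v = {v}ᶜ := by
    apply Set.eq_of_subset_of_ncard_le
    · intro w hw
      exact Set.mem_compl_singleton_iff.mpr (G.ne_of_adj hw).symm
    · rw [hcompl, hdegv]
    · exact Set.toFinite _
  have hadj_v : ∀ u : Fin n, u ≠ v → G.Adj v u := by
    intro u hu
    have : u ∈ G.neighborSet v := by
      rw [hnbrv]; exact Set.mem_compl_singleton_iff.mpr hu
    exact this
  have hdeg : ∀ u : Fin n, u ≠ v → (G.neighborSet u).ncard = n - 3 := by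
    intro u hu
    have hu' : u ∈ ({v}ᶜ : Set (Fin n)) := Set.mem_compl_singleton_iff.mpr hu
    have h1 := hreg ⟨u, hu'⟩
    have h2 : Subtype.val '' ((G.induce {v}ᶜ).neighborSet ⟨u, hu'⟩)
        = G.neighborSet u \ {v} := by
      ext w
      simp only [Set.mem_image, SimpleGraph.mem_neighborSet, comap_adj,
        Function.Embedding.coe_subtype, Set.mem_diff, Set.mem_singleton_iff]
      constructor
      · rintro ⟨⟨w', hw'⟩, hadj, rfl⟩
        exact ⟨hadj, hw'⟩
      · rintro ⟨hadj, hwv⟩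
        exact ⟨⟨w, Set.mem_compl_singleton_iff.mpr hwv⟩, hadj, rfl⟩
    have h3 : (G.neighborSet u \ {v}).ncard = n - 4 := by
      rw [← h2, Set.ncard_image_of_injective _ Subtype.val_injective, h1]
    have hv_mem : v ∈ G.neighborSet u := (hadj_v u hu).symm
    have h4 := Set.ncard_diff_singleton_add_one hv_mem (Set.toFinite _)
    rw [h3] at h4
    omega
  have hdist2 : ∀ u w : Fin n, u ≠ w → ¬ G.Adj u w → G.dist u w = 2 := by
    intro u w huw hnadj
    have hune : u ≠ v := by rintro rfl; exact hnadj (hadj_v w (Ne.symm huw))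
    have hwne : w ≠ v := by rintro rfl; exact hnadj ((hadj_v u hune).symm)
    have hle : G.dist u w ≤ 2 := by
      simpa using SimpleGraph.dist_le (Walk.cons (hadj_v u hune).symm (hadj_v w hwne).toWalk)
    have h0 : G.dist u w ≠ 0 := by
      rw [Ne, hconn.dist_eq_zero_iff]; exact huw
    have h1 : G.dist u w ≠ 1 := by
      rw [Ne, SimpleGraph.dist_eq_one_iff_adj]; exact hnadj
    omega
  have hcard : ∀ u : Fin n, u ≠ v →
      (Finset.univ.filter (fun w => G.Adj u w)).card = n - 3 := by
    intro u hu
    have hc := hdeg u hu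
    have heq : G.neighborSet u = {w | G.Adj u w} := rfl
    rwa [heq, Set.ncard_eq_toFinset_card', Set.toFinset_setOf] at hc
  -- the eigenvalue
  have hn4 : (4 : ℝ) ≤ (n : ℝ) := by exact_mod_cast hn
  set s : ℝ := Real.sqrt ((n : ℝ) ^ 2 + 4 * n - 4) with hs_def
  have hs2 : s ^ 2 = (n : ℝ) ^ 2 + 4 * n - 4 := Real.sq_sqrt (by nlinarith)
  have hsn : (n : ℝ) ≤ s := by
    nlinarith [Real.sqrt_nonneg ((n : ℝ) ^ 2 + 4 * n - 4)]
  set lam : ℝ := ((n : ℝ) + s) / 2 with hlam_def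
  have hlam_pos : 0 < lam := by
    have : (0:ℝ) < n := by linarith
    simp only [hlam_def]; linarith
  have hquad : lam ^ 2 = (n : ℝ) * lam + ((n : ℝ) - 1) := by
    simp only [hlam_def]; nlinarith
  set a : ℝ := ((n : ℝ) - 1) / lam with ha_def
  have ha_pos : 0 < a := div_pos (by linarith) hlam_pos
  set x : Fin n → ℝ := fun i => if i = v then a else 1 with hx_def
  have hx_pos : ∀ i, 0 < x i := by
    intro i
    simp only [hx_def]
    split
    · exact ha_pos
    · exact one_pos
  have hlam_eq : lam = (n : ℝ) + a := by
    rw [ha_def]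
    field_simp
    nlinarith [hquad, hlam_pos]
  have hcast3 : ((n - 3 : ℕ) : ℝ) = (n : ℝ) - 3 := by
    have : (3:ℕ) ≤ n := by omega
    push_cast [Nat.cast_sub this]; ring
  have hmain : distMatrix G *ᵥ x = lam • x := by
    funext u
    simp only [Matrix.mulVec, dotProduct, Pi.smul_apply, smul_eq_mul]
    by_cases hu : u = v
    · subst hu
      -- note: `v` has been eliminated; the distinguished vertex is now `u`
      have hterm : ∀ w, distMatrix G u w * x w = if w = u then (0:ℝ) else 1 := by
        intro w
        by_cases hw : w = u
        · simp [distMatrix, hw, SimpleGraph.dist_self]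
        · have hd : G.dist u w = 1 := SimpleGraph.dist_eq_one_iff_adj.mpr (hadj_v w hw)
          simp [distMatrix, hd, hw, hx_def]
      rw [Finset.sum_congr rfl fun w _ => hterm w]
      have hrw : ∀ w : Fin n, (if w = u then (0:ℝ) else 1)
          = 1 - (if w = u then 1 else 0) := by
        intro w; split <;> norm_num
      rw [Finset.sum_congr rfl fun w _ => hrw w, Finset.sum_sub_distrib,
        Finset.sum_ite_eq' Finset.univ u (fun _ => (1:ℝ))]
      simp only [Finset.mem_univ, if_true, Finset.sum_const, Finset.card_univ,
        Fintype.card_fin, nsmul_eq_mul, mul_one]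
      have hxu : x u = a := by simp [hx_def]
      rw [hxu, ha_def]
      field_simp
    · have hterm : ∀ w, distMatrix G u w * x w
          = 2 - (if w = u then 2 else 0) - (if G.Adj u w then 1 else 0)
            + (if w = v then a - 1 else 0) := by
        intro w
        by_cases hw : w = v
        · have hadj : G.Adj u v := (hadj_v u hu).symm
          have hd : G.dist u v = 1 := SimpleGraph.dist_eq_one_iff_adj.mpr hadj
          have hvu : ¬ (v = u) := fun h => hu h.symm
          simp only [hw, distMatrix, hd, hx_def, if_pos rfl, if_neg hvu, if_pos hadj]
          push_cast; ring
        · by_cases hwu : w = u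
          · simp [hwu, distMatrix, SimpleGraph.dist_self, hw, hx_def, hu, G.irrefl]
          · by_cases hadj : G.Adj u w
            · have hd : G.dist u w = 1 := SimpleGraph.dist_eq_one_iff_adj.mpr hadj
              simp only [distMatrix, hd, hx_def, if_neg hw, if_neg hwu, if_pos hadj]
              norm_num
            · have hd : G.dist u w = 2 := hdist2 u w (Ne.symm hwu) hadj
              simp [distMatrix, hd, hx_def, hw, hwu, hadj]
      rw [Finset.sum_congr rfl fun w _ => hterm w]
      rw [Finset.sum_add_distrib, Finset.sum_sub_distrib, Finset.sum_sub_distrib]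
      rw [Finset.sum_ite_eq' Finset.univ u (fun _ => (2:ℝ)),
        Finset.sum_ite_eq' Finset.univ v (fun _ => a - 1)]
      simp only [Finset.mem_univ, if_true, Finset.sum_const, Finset.card_univ, Fintype.card_fin,
        nsmul_eq_mul]
      have hfil : ∑ w : Fin n, (if G.Adj u w then (1:ℝ) else 0) = (n : ℝ) - 3 := by
        rw [Finset.sum_boole]
        rw [hcard u hu]
        exact hcast3
      rw [hfil]
      have hxu : x u = 1 := by simp [hx_def, hu]
      rw [hxu, mul_one, hlam_eq]
      ring
  have hn0 : 0 < n := by omega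
  have := perron_eq hn0 (distMatrix G) (distMatrix_isHermitian G)
    (fun i j => by unfold distMatrix; positivity) x hx_pos lam hmain
  rw [lambda1, this]
end

section
/- Let G be an (n−4)-DVDR graph on n vertices. Then D_max(G) = n+1 and D_max(G) − λ₁(G) = (n+2−√(n²+4n−4))/2. -/
open SimpleGraph Matrix Finset BigOperators

/-!
The vertex `v` of degree `n - 1` is universal, so `G` has diameter at most `2` and the
transmission of any vertex `u` is `2 (n - 1) - deg u`. This is `n - 1` for `v` and `n + 1` for
every other vertex, whose degree is `(n - 4) + 1`.

For `λ₁`, write `s = √(n² + 4n - 4)`. The vector equal to `(s - n) / 2` at `v` and to `1`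
elsewhere is a positive eigenvector of the distance matrix for `(n + s) / 2`, and for a
nonnegative symmetric matrix the eigenvalue of a positive eigenvector is the largest one.
-/

theorem Matrix.abs_le_of_mulVec_eq_smul_of_pos {ι R : Type*} [Fintype ι] [Field R]
    [LinearOrder R] [IsStrictOrderedRing R] {A : Matrix ι ι R} (hA : ∀ i j, 0 ≤ A i j)
    {x y : ι → R} {μ ν : R} (hx : ∀ i, 0 < x i) (hAx : A *ᵥ x = μ • x) (hy : y ≠ 0)
    (hAy : A *ᵥ y = ν • y) : |ν| ≤ μ := by
  -- `c • x` is the least multiple of `x` dominating `|y|`; compare the rows at a tight index `i`.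
  obtain ⟨j, hj⟩ := Function.ne_iff.1 hy
  obtain ⟨i, -, hi⟩ := Finset.exists_max_image univ (fun i => |y i| / x i) ⟨j, mem_univ j⟩
  set c := |y i| / x i
  have hy_le : ∀ k, |y k| ≤ c * x k := fun k => (div_le_iff₀ (hx k)).1 (hi k (mem_univ k))
  have hc : 0 < c := (div_pos (abs_pos.2 hj) (hx j)).trans_le (hi j (mem_univ j))
  have hyi : |y i| = c * x i := (div_mul_cancel₀ _ (hx i).ne').symm
  have key : |ν| * (c * x i) ≤ μ * (c * x i) :=
    calc |ν| * (c * x i) = |(A *ᵥ y) i| := by rw [hAy, Pi.smul_apply, smul_eq_mul, abs_mul, hyi]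
      _ ≤ ∑ k, |A i k * y k| := abs_sum_le_sum_abs _ _
      _ ≤ ∑ k, A i k * (c * x k) := by
          gcongr with k
          rw [abs_mul, abs_of_nonneg (hA i k)]
          exact mul_le_mul_of_nonneg_left (hy_le k) (hA i k)
      _ = c * (A *ᵥ x) i := by simp only [mulVec, dotProduct, mul_sum, mul_left_comm]
      _ = μ * (c * x i) := by rw [hAx, Pi.smul_apply, smul_eq_mul]; ring
  exact le_of_mul_le_mul_right key (mul_pos hc (hx i))

theorem Matrix.IsHermitian.iSup_eigenvalues_eq_of_mulVec_eq_smul {ι : Type*} [Fintype ι]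
    [DecidableEq ι] [Nonempty ι] {A : Matrix ι ι ℝ} (hA : A.IsHermitian)
    (hA₀ : ∀ i j, 0 ≤ A i j) {x : ι → ℝ} {μ : ℝ}
    (hx : ∀ i, 0 < x i) (hAx : A *ᵥ x = μ • x) : ⨆ i, hA.eigenvalues i = μ := by
  obtain ⟨i, rfl⟩ : μ ∈ Set.range hA.eigenvalues := by
    rw [← hA.spectrum_real_eq_range_eigenvalues, ← Matrix.spectrum_toLin',
      ← Module.End.hasEigenvalue_iff_mem_spectrum]
    have hx₀ : x ≠ 0 := fun h => (hx (Classical.arbitrary ι)).ne' (by simp [h])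
    exact Module.End.hasEigenvalue_of_hasEigenvector
      ⟨Module.End.mem_eigenspace_iff.2 (by rwa [Matrix.toLin'_apply]), hx₀⟩
  refine le_antisymm (ciSup_le fun j => ?_) (le_ciSup (Set.finite_range _).bddAbove i)
  exact (le_abs_self _).trans <| abs_le_of_mulVec_eq_smul_of_pos hA₀ hx hAx
    (mt (WithLp.ofLp_eq_zero 2).1 (hA.eigenvectorBasis.orthonormal.ne_zero j))
    (hA.mulVec_eigenvectorBasis j)

namespace SimpleGraph

variable {V : Type*} {G : SimpleGraph V} {v : V}

theorem IsUniversal.dist_eq (hv : G.IsUniversal v) (u w : V) [Decidable (u = w)]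
    [Decidable (G.Adj u w)] : G.dist u w = if u = w then 0 else if G.Adj u w then 1 else 2 := by
  split_ifs with huw hadj
  · simp [huw]
  · exact dist_eq_one_iff_adj.2 hadj
  · have huv : v ≠ u := by rintro rfl; exact hadj (hv huw)
    have hwv : v ≠ w := by rintro rfl; exact hadj (hv (Ne.symm huw)).symm
    have hle : G.dist u w ≤ 2 := by
      simpa using dist_le ((hv huv).symm.toWalk.append (hv hwv).toWalk)
    have h0 : G.dist u w ≠ 0 := (Reachable.of_isUniversal u hv |>.symm.trans
      (Reachable.of_isUniversal w hv)).dist_eq_zero_iff.not.2 huw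
    have h1 : G.dist u w ≠ 1 := dist_eq_one_iff_adj.not.2 hadj
    omega

theorem IsUniversal.sum_dist_add_degree [Fintype V] [DecidableEq V] [DecidableRel G.Adj]
    (hv : G.IsUniversal v) (u : V) : ∑ w, G.dist u w + G.degree u = 2 * (Fintype.card V - 1) := by
  have hpt : ∀ w, G.dist u w + (if G.Adj u w then 1 else 0) = if u = w then 0 else 2 := by
    intro w
    rw [hv.dist_eq]
    split_ifs with h1 h2 <;> simp_all
  rw [← card_neighborFinset_eq_degree, neighborFinset_eq_filter, card_filter, ← sum_add_distrib,
    sum_congr rfl fun w _ => hpt w, sum_ite, sum_const_zero, sum_const, filter_ne,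
    card_erase_of_mem (mem_univ u), card_univ, smul_eq_mul, zero_add, mul_comm]

theorem ncard_neighborSet_eq_degree [Fintype V] [DecidableRel G.Adj] (u : V) :
    (G.neighborSet u).ncard = G.degree u := by
  rw [Set.ncard_eq_toFinset_card', ← card_neighborFinset_eq_degree]
  rfl

theorem IsUniversal.ncard_neighborSet_induce_compl_add_one [Finite V] (hv : G.IsUniversal v)
    (w : ({v}ᶜ : Set V)) :
    ((G.induce {v}ᶜ).neighborSet w).ncard + 1 = (G.neighborSet w).ncard := by
  have hvw : v ≠ w := fun h => w.2 h.symm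
  rw [neighborSet_induce, ← Set.ncard_image_of_injective _ Subtype.val_injective,
    Subtype.image_preimage_coe, Set.inter_comm, ← Set.sdiff_eq]
  exact Set.ncard_sdiff_singleton_add_one (hv hvw).symm

end SimpleGraph

theorem SimpleGraph.IsUniversal.transmission_add_degree {n : ℕ} {G : SimpleGraph (Fin n)}
    [DecidableRel G.Adj] {v : Fin n} (hv : G.IsUniversal v) (u : Fin n) :
    transmission G u + G.degree u = 2 * (n - 1) := by
  simpa [transmission] using hv.sum_dist_add_degree u

theorem IsDVDR.exists_isUniversal_degree_eq {n r : ℕ} {G : SimpleGraph (Fin n)}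
    [DecidableRel G.Adj]
    (hG : IsDVDR G r) : ∃ v, G.IsUniversal v ∧ ∀ u ≠ v, G.degree u = r + 1 := by
  obtain ⟨-, v, hv, hreg⟩ := hG
  have hvu : G.IsUniversal v := by
    rw [← degree_eq_card_sub_one, ← ncard_neighborSet_eq_degree, hv, Fintype.card_fin]
  refine ⟨v, hvu, fun u hu => ?_⟩
  rw [← ncard_neighborSet_eq_degree,
    ← hvu.ncard_neighborSet_induce_compl_add_one ⟨u, Set.mem_compl_singleton_iff.2 hu⟩, hreg]

theorem IsDVDR.exists_isUniversal_transmission_eq {n r : ℕ} {G : SimpleGraph (Fin n)}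
    (hG : IsDVDR G r) : ∃ v, G.IsUniversal v ∧ transmission G v + 1 = n ∧
      ∀ u ≠ v, transmission G u + r + 3 = 2 * n := by
  classical
  obtain ⟨v, hv, hdeg⟩ := hG.exists_isUniversal_degree_eq
  have hn : 0 < n := v.pos
  refine ⟨v, hv, ?_, fun u hu => ?_⟩
  · have := hv.transmission_add_degree v
    rw [(G.degree_eq_card_sub_one v).2 hv, Fintype.card_fin] at this
    omega
  · have := hv.transmission_add_degree u
    rw [hdeg u hu] at this
    omega

theorem lambda1_eq_of_isUniversal {n : ℕ} {G : SimpleGraph (Fin n)} {v : Fin n}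
    (hv : G.IsUniversal v) {T : ℕ} (hT : ∀ u ≠ v, transmission G u = T) {μ t : ℝ}
    (ht : 0 < t) (hμv : μ * t = transmission G v) (hμ : μ = T - 1 + t) : lambda1 G = μ := by
  have : Nonempty (Fin n) := ⟨v⟩
  set x : Fin n → ℝ := 1 + Pi.single v (t - 1)
  have hx : ∀ i, 0 < x i := by
    intro i
    rcases eq_or_ne i v with rfl | h <;> simp [x, *]
  refine (distMatrix_isHermitian G).iSup_eigenvalues_eq_of_mulVec_eq_smul
    (fun _ _ => Nat.cast_nonneg _) hx ?_
  ext u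
  have hrow : (distMatrix G *ᵥ x) u = transmission G u + G.dist u v * (t - 1) := by
    simp [x, mulVec, dotProduct, distMatrix, transmission, mul_add, sum_add_distrib,
      Pi.single_apply]
  rcases eq_or_ne u v with rfl | hu
  · simp [hrow, x, hμv]
  · rw [hrow, hT u hu, dist_eq_one_iff_adj.2 (hv hu.symm).symm]
    have hxu : x u = 1 := by simp [x, hu]
    rw [Pi.smul_apply, hxu, hμ]
    push_cast
    ring

theorem stmt3 (n : ℕ) (hn : 4 ≤ n) (G : SimpleGraph (Fin n)) (hG : IsDVDR G (n - 4)) :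
    Dmax G = n + 1 ∧
    (Dmax G : ℝ) - lambda1 G =
      ((n : ℝ) + 2 - Real.sqrt ((n : ℝ) ^ 2 + 4 * n - 4)) / 2 := by
  obtain ⟨v, hv, hTv, hTu⟩ := hG.exists_isUniversal_transmission_eq
  replace hTu : ∀ u ≠ v, transmission G u = n + 1 := fun u hu => by have := hTu u hu; omega
  have hDmax : Dmax G = n + 1 := by
    have : Nontrivial (Fin n) := Fin.nontrivial_iff_two_le.2 (by omega)
    obtain ⟨u, hu⟩ := exists_ne v
    refine le_antisymm (Finset.sup_le fun w _ => ?_) (hTu u hu ▸ Finset.le_sup (mem_univ u))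
    rcases eq_or_ne w v with rfl | hw
    · omega
    · exact (hTu w hw).le
  set s := Real.sqrt ((n : ℝ) ^ 2 + 4 * n - 4)
  have hn' : (4 : ℝ) ≤ n := by exact_mod_cast hn
  have hs : s ^ 2 = (n : ℝ) ^ 2 + 4 * n - 4 := Real.sq_sqrt (by nlinarith)
  have hsn : (n : ℝ) < s := Real.lt_sqrt (by positivity) |>.2 (by nlinarith)
  have hlam : lambda1 G = (n + s) / 2 := by
    refine lambda1_eq_of_isUniversal hv hTu (t := (s - n) / 2) (by linarith) ?_
      (by push_cast; ring)
    rw [eq_sub_of_add_eq (by exact_mod_cast hTv : (transmission G v : ℝ) + 1 = n)]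
    nlinarith
  refine ⟨hDmax, ?_⟩
  rw [hDmax, hlam]
  push_cast
  ring
end

section
/- Let G be a connected graph on n vertices with distance matrix D, distance spectral radius λ₁ with positive unit eigenvector x, maximum transmission D_max, and Wiener index W. Then D_max − λ₁ = Σ_{u∈V} (D_max − D_u) x_u² + Σ_{{u,v}⊆V} d(u,v)(x_u − x_v)², and consequently D_max − λ₁ ≥ (n·D_max − 2W)·x_min², where x_min is the minimal entry of x. -/
open SimpleGraph Matrix Finset BigOperators

theorem stmt4 (n : ℕ) (G : SimpleGraph (Fin n)) (hG : G.Connected)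
    (x : Fin n → ℝ) (hx : ∀ i, 0 < x i) (hunit : ∑ i, x i ^ 2 = 1)
    (heig : (distMatrix G).mulVec x = lambda1 G • x)
    (xmin : ℝ) (hmin_mem : ∃ i, x i = xmin) (hmin_le : ∀ i, xmin ≤ x i) :
    (Dmax G : ℝ) - lambda1 G =
        (∑ u, ((Dmax G : ℝ) - (transmission G u : ℝ)) * x u ^ 2)
          + (∑ u, ∑ v, (G.dist u v : ℝ) * (x u - x v) ^ 2) / 2 ∧
    (Dmax G : ℝ) - lambda1 G ≥
        ((n : ℝ) * (Dmax G : ℝ) - 2 * wiener G) * xmin ^ 2 := by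
  set lam := lambda1 G with hlam
  have hT : ∀ u, (transmission G u : ℝ) = ∑ v, (G.dist u v : ℝ) := by
    intro u; simp [transmission]
  have hlameq : lam = ∑ u, ∑ v, (G.dist u v : ℝ) * (x u * x v) := by
    have h := congrArg (fun w => ∑ u, x u * w u) heig
    simp only [Matrix.mulVec, dotProduct, Pi.smul_apply, smul_eq_mul,
      distMatrix] at h
    calc lam = lam * ∑ i, x i ^ 2 := by rw [hunit, mul_one]
    _ = ∑ u, x u * (lam * x u) := by rw [Finset.mul_sum]; apply Finset.sum_congr rfl; intros; ring
    _ = ∑ u, x u * ∑ v, (G.dist u v : ℝ) * x v := h.symm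
    _ = ∑ u, ∑ v, (G.dist u v : ℝ) * (x u * x v) := by
        apply Finset.sum_congr rfl; intro u _
        rw [Finset.mul_sum]; apply Finset.sum_congr rfl; intros; ring
  have hsym : ∑ u, ∑ v, (G.dist u v : ℝ) * x v ^ 2
      = ∑ u, (transmission G u : ℝ) * x u ^ 2 := by
    rw [Finset.sum_comm]
    apply Finset.sum_congr rfl; intro v _
    rw [hT, Finset.sum_mul]
    apply Finset.sum_congr rfl; intro u _
    rw [SimpleGraph.dist_comm]
  have hS : ∑ u, ∑ v, (G.dist u v : ℝ) * (x u - x v) ^ 2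
      = 2 * (∑ u, (transmission G u : ℝ) * x u ^ 2) - 2 * lam := by
    have expand : ∀ u v : Fin n, (G.dist u v : ℝ) * (x u - x v) ^ 2
        = (G.dist u v : ℝ) * x u ^ 2 - 2 * ((G.dist u v : ℝ) * (x u * x v))
          + (G.dist u v : ℝ) * x v ^ 2 := by intros; ring
    simp only [expand, Finset.sum_add_distrib, Finset.sum_sub_distrib,
      ← Finset.mul_sum]
    rw [hsym, hlameq]
    have h1 : ∑ u, ∑ v, (G.dist u v : ℝ) * x u ^ 2
        = ∑ u, (transmission G u : ℝ) * x u ^ 2 := by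
      apply Finset.sum_congr rfl; intro u _
      rw [hT, Finset.sum_mul]
    rw [h1]; ring
  have hA : ∑ u, ((Dmax G : ℝ) - (transmission G u : ℝ)) * x u ^ 2
      = (Dmax G : ℝ) - ∑ u, (transmission G u : ℝ) * x u ^ 2 := by
    simp only [sub_mul, Finset.sum_sub_distrib, ← Finset.mul_sum, hunit, mul_one]
  have part1 : (Dmax G : ℝ) - lam =
      (∑ u, ((Dmax G : ℝ) - (transmission G u : ℝ)) * x u ^ 2)
        + (∑ u, ∑ v, (G.dist u v : ℝ) * (x u - x v) ^ 2) / 2 := by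
    rw [hA, hS]; ring
  refine ⟨part1, ?_⟩
  rw [part1]
  have hxmin : 0 < xmin := by obtain ⟨i, hi⟩ := hmin_mem; exact hi ▸ hx i
  have hW : ((n : ℝ) * (Dmax G : ℝ) - 2 * wiener G) * xmin ^ 2
      = ∑ u, ((Dmax G : ℝ) - (transmission G u : ℝ)) * xmin ^ 2 := by
    rw [← Finset.sum_mul]
    congr 1
    simp only [wiener, Finset.sum_sub_distrib, Finset.sum_const, Finset.card_univ,
      Fintype.card_fin, nsmul_eq_mul]
    ring
  rw [hW]
  have h2 : (0:ℝ) ≤ (∑ u, ∑ v, (G.dist u v : ℝ) * (x u - x v) ^ 2) / 2 := by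
    apply div_nonneg _ (by norm_num)
    apply Finset.sum_nonneg; intro u _
    apply Finset.sum_nonneg; intro v _
    positivity
  have h1 : ∑ u, ((Dmax G : ℝ) - (transmission G u : ℝ)) * xmin ^ 2
      ≤ ∑ u, ((Dmax G : ℝ) - (transmission G u : ℝ)) * x u ^ 2 := by
    apply Finset.sum_le_sum; intro u _
    apply mul_le_mul_of_nonneg_left
    · exact pow_le_pow_left₀ hxmin.le (hmin_le u) 2
    · have : transmission G u ≤ Dmax G := Finset.le_sup (Finset.mem_univ u)
      have : (transmission G u : ℝ) ≤ (Dmax G : ℝ) := by exact_mod_cast this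
      linarith
  linarith
end

section
/- Let G be a connected graph on n ≥ 2 vertices with distance spectral radius λ₁ and Perron eigenvector x of its distance matrix. Let u, v be vertices where x attains its maximum x_max and minimum x_min respectively. Then D_max − λ₁ ≥ d(u,v)·(1 − x_min/x_max) ≥ 1 − x_min/x_max, where D_max is the maximum transmission. -/
open SimpleGraph Matrix Finset BigOperators

theorem stmt5 (n : ℕ) (hn : 2 ≤ n) (G : SimpleGraph (Fin n)) (hG : G.Connected)
    (x : Fin n → ℝ) (hx : ∀ i, 0 < x i)
    (heig : (distMatrix G).mulVec x = lambda1 G • x)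
    (u v : Fin n) (hu : ∀ w, x w ≤ x u) (hv : ∀ w, x v ≤ x w) :
    (Dmax G : ℝ) - lambda1 G ≥ (G.dist u v : ℝ) * (1 - x v / x u) ∧
    (G.dist u v : ℝ) * (1 - x v / x u) ≥ 1 - x v / x u := by
  have hxu : 0 < x u := hx u
  have heq : ∑ w, (G.dist u w : ℝ) * x w = lambda1 G * x u := by
    have := congrFun heig u
    simpa [Matrix.mulVec, dotProduct, distMatrix] using this
  have h1 : (G.dist u v : ℝ) * (x u - x v) ≤ ∑ w, (G.dist u w : ℝ) * (x u - x w) :=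
    Finset.single_le_sum (f := fun w => (G.dist u w : ℝ) * (x u - x w))
      (fun w _ => mul_nonneg (Nat.cast_nonneg _) (sub_nonneg.2 (hu w)))
      (Finset.mem_univ v)
  have h2 : ∑ w, (G.dist u w : ℝ) * (x u - x w)
      = (transmission G u : ℝ) * x u - lambda1 G * x u := by
    simp only [mul_sub]
    rw [Finset.sum_sub_distrib, heq, ← Finset.sum_mul]
    congr 2
    simp [transmission]
  have h3 : (transmission G u : ℝ) ≤ (Dmax G : ℝ) := by
    exact_mod_cast Finset.le_sup (f := transmission G) (Finset.mem_univ u)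
  constructor
  · rw [ge_iff_le]
    have hdiv : (G.dist u v : ℝ) * (1 - x v / x u)
        = (G.dist u v : ℝ) * (x u - x v) / x u := by
      field_simp
    rw [hdiv, div_le_iff₀ hxu]
    nlinarith [h1, h2, h3]
  · rcases eq_or_ne u v with h | h
    · subst h
      simp [div_self hxu.ne']
    · have hd : (1 : ℝ) ≤ (G.dist u v : ℝ) :=
        Nat.one_le_cast.2 (hG.pos_dist_of_ne h)
      have ht : 0 ≤ 1 - x v / x u :=
        sub_nonneg.2 ((div_le_one hxu).2 (hu v))
      nlinarith
end

section
/- Let G be a connected graph on n vertices, λ₁ its distance spectral radius, x a positive eigenvector of the distance matrix for λ₁, D_max the maximum transmission, and W the Wiener index. Then (D_max − λ₁)·Σ_{w∈V} x_w = Σ_{w∈V} (D_max − D_w)·x_w ≥ (n·D_max − 2W)·x_min, and consequently D_max − λ₁ ≥ (n·D_max − 2W)·x_min/(x_min + (n−1)·x_max). -/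
open SimpleGraph Matrix Finset BigOperators

theorem stmt9 (n : ℕ) (G : SimpleGraph (Fin n)) (hG : G.Connected)
    (x : Fin n → ℝ) (hx : ∀ i, 0 < x i)
    (heig : (distMatrix G).mulVec x = lambda1 G • x)
    (xmax xmin : ℝ) (hmax_mem : ∃ i, x i = xmax) (hmax_le : ∀ i, x i ≤ xmax)
    (hmin_mem : ∃ i, x i = xmin) (hmin_le : ∀ i, xmin ≤ x i) :
    ((Dmax G : ℝ) - lambda1 G) * ∑ w, x w
        = ∑ w, ((Dmax G : ℝ) - (transmission G w : ℝ)) * x w ∧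
    ∑ w, ((Dmax G : ℝ) - (transmission G w : ℝ)) * x w
        ≥ ((n : ℝ) * (Dmax G : ℝ) - 2 * wiener G) * xmin ∧
    (Dmax G : ℝ) - lambda1 G ≥
        ((n : ℝ) * (Dmax G : ℝ) - 2 * wiener G) * xmin
          / (xmin + ((n : ℝ) - 1) * xmax) := by
  obtain ⟨i0, hi0⟩ := hmin_mem
  obtain ⟨i1, hi1⟩ := hmax_mem
  have hn : 0 < n := i0.pos
  have hxmin : 0 < xmin := hi0 ▸ hx i0
  have hxmax : 0 < xmax := hi1 ▸ hx i1
  have hDle : ∀ w : Fin n, (transmission G w : ℝ) ≤ (Dmax G : ℝ) := by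
    intro w
    exact_mod_cast Finset.le_sup (f := transmission G) (Finset.mem_univ w)
  have h2W : 2 * wiener G = ∑ w, (transmission G w : ℝ) := by
    unfold wiener; ring
  -- key: sum the eigenvalue equation over all vertices
  have hkey : lambda1 G * ∑ w, x w = ∑ w, (transmission G w : ℝ) * x w := by
    have h := congrArg (fun v => ∑ w, v w) heig
    simp only [Pi.smul_apply, smul_eq_mul] at h
    rw [← Finset.mul_sum] at h
    rw [← h]
    have : ∀ w, (distMatrix G).mulVec x w = ∑ u, (G.dist w u : ℝ) * x u := by
      intro w
      simp [Matrix.mulVec, dotProduct, distMatrix]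
    simp only [this]
    rw [Finset.sum_comm]
    refine Finset.sum_congr rfl fun u _ => ?_
    rw [← Finset.sum_mul]
    congr 1
    unfold transmission
    push_cast
    exact Finset.sum_congr rfl fun w _ => by rw [SimpleGraph.dist_comm]
  have part1 : ((Dmax G : ℝ) - lambda1 G) * ∑ w, x w
      = ∑ w, ((Dmax G : ℝ) - (transmission G w : ℝ)) * x w := by
    rw [sub_mul, hkey, Finset.mul_sum, ← Finset.sum_sub_distrib]
    exact Finset.sum_congr rfl fun w _ => by ring
  have hrhs : ((n : ℝ) * (Dmax G : ℝ) - 2 * wiener G) * xmin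
      = ∑ w, ((Dmax G : ℝ) - (transmission G w : ℝ)) * xmin := by
    rw [← Finset.sum_mul, Finset.sum_sub_distrib, Finset.sum_const, Finset.card_univ,
      Fintype.card_fin, nsmul_eq_mul, h2W]
  have part2 : ∑ w, ((Dmax G : ℝ) - (transmission G w : ℝ)) * x w
      ≥ ((n : ℝ) * (Dmax G : ℝ) - 2 * wiener G) * xmin := by
    rw [hrhs]
    refine Finset.sum_le_sum fun w _ => ?_
    exact mul_le_mul_of_nonneg_left (hmin_le w) (sub_nonneg.mpr (hDle w))
  refine ⟨part1, part2, ?_⟩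
  have hsumpos : 0 < ∑ w, x w :=
    Finset.sum_pos (fun w _ => hx w) ⟨i0, Finset.mem_univ i0⟩
  have hnum : 0 ≤ ((n : ℝ) * (Dmax G : ℝ) - 2 * wiener G) * xmin := by
    refine mul_nonneg ?_ hxmin.le
    rw [h2W]
    have : ∑ w, (transmission G w : ℝ) ≤ ∑ _w : Fin n, (Dmax G : ℝ) :=
      Finset.sum_le_sum fun w _ => hDle w
    simp only [Finset.sum_const, Finset.card_univ, Fintype.card_fin, nsmul_eq_mul] at this
    linarith
  have hdenpos : 0 < xmin + ((n : ℝ) - 1) * xmax := by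
    have h1 : (1 : ℝ) ≤ (n : ℝ) := by exact_mod_cast hn
    nlinarith
  have hsumle : ∑ w, x w ≤ xmin + ((n : ℝ) - 1) * xmax := by
    have herase : ∑ w ∈ Finset.univ.erase i0, x w ≤ ((n : ℝ) - 1) * xmax := by
      have hcard : (Finset.univ.erase i0).card = n - 1 := by
        rw [Finset.card_erase_of_mem (Finset.mem_univ i0), Finset.card_univ,
          Fintype.card_fin]
      have := Finset.sum_le_card_nsmul (Finset.univ.erase i0) x xmax
        (fun w _ => hmax_le w)
      rw [hcard, nsmul_eq_mul] at this
      have hcast : ((n - 1 : ℕ) : ℝ) = (n : ℝ) - 1 := by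
        have h1 : (1 : ℕ) ≤ n := hn
        push_cast [h1]
        ring
      rwa [hcast] at this
    calc ∑ w, x w = x i0 + ∑ w ∈ Finset.univ.erase i0, x w :=
          (Finset.add_sum_erase _ x (Finset.mem_univ i0)).symm
      _ ≤ xmin + ((n : ℝ) - 1) * xmax := by rw [hi0]; linarith
  have hlampos : 0 ≤ ((Dmax G : ℝ) - lambda1 G) := by
    by_contra hneg
    push_neg at hneg
    nlinarith [part1, part2]
  rw [ge_iff_le, div_le_iff₀ hdenpos]
  nlinarith [part1, part2, mul_le_mul_of_nonneg_left hsumle hlampos]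
end

section
/- Let G be a connected non-transmission-regular graph of order n with n even. Then D_max(G) − λ₁(G) ≥ (n+2−√(n²+4n−4))/2, with equality if and only if G is an (n−4)-DVDR graph. -/
open SimpleGraph Matrix Finset BigOperators

/-!
Let `x ≥ 0` be a Perron vector of the distance matrix `D`, `t` a vertex where `x` is smallest,
`S = ∑ x`, `g = Dmax - λ₁` and `Δ = ∑ (Dmax - Tr v)`, an even positive integer. Since distances
between distinct vertices are at least one, `(D x)_t = λ₁ x_t` gives `S ≤ (λ₁ + n - Tr t) x_t`;
summing `D x = λ₁ x` gives `Δ x_t ≤ g S`. Hence `max 2 (Dmax - Tr t) ≤ Δ ≤ g (n + Dmax - Tr t - g)`,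
which forces `g` to be at least the smaller root `ε` of `ε (n + 2 - ε) = 2`. In the equality case
all estimates are sharp: `Dmax - Tr t = Δ = 2`, so `t` is the only vertex of non-maximal
transmission, and equality in the first estimate makes `t` adjacent to every vertex. This is the
`(n-4)`-DVDR structure, on which `λ₁` is computed from an explicit positive eigenvector.
-/

namespace Matrix.IsHermitian

variable {ι : Type*} [Fintype ι] [DecidableEq ι] {A : Matrix ι ι ℝ}

open scoped MatrixOrder in
lemma posSemidef_iSup_eigenvalues_smul_one_sub (hA : A.IsHermitian) :
    ((⨆ i, hA.eigenvalues i) • (1 : Matrix ι ι ℝ) - A).PosSemidef := by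
  rw [← Algebra.algebraMap_eq_smul_one]
  refine le_algebraMap_of_spectrum_le (fun r hr ↦ ?_) hA
  obtain ⟨i, rfl⟩ := hA.spectrum_real_eq_range_eigenvalues ▸ hr
  exact le_ciSup (Set.finite_range _).bddAbove i

/-- Perron–Frobenius for symmetric nonnegative matrices: replacing an eigenvector of the top
eigenvalue by its absolute value does not decrease the Rayleigh quotient, so the absolute value
is again a top eigenvector. -/
lemma exists_nonneg_mulVec_eq_iSup_eigenvalues_smul [Nonempty ι] (hA : A.IsHermitian)
    (hA0 : ∀ i j, 0 ≤ A i j) :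
    ∃ x : ι → ℝ, x ≠ 0 ∧ 0 ≤ x ∧ A *ᵥ x = (⨆ i, hA.eigenvalues i) • x := by
  set μ := ⨆ i, hA.eigenvalues i
  have hM : (μ • (1 : Matrix ι ι ℝ) - A).PosSemidef := hA.posSemidef_iSup_eigenvalues_smul_one_sub
  have hMv (v : ι → ℝ) : (μ • (1 : Matrix ι ι ℝ) - A) *ᵥ v = μ • v - A *ᵥ v := by
    rw [sub_mulVec, smul_mulVec, one_mulVec]
  obtain ⟨i₀, hi₀⟩ := Finite.exists_max hA.eigenvalues
  have hμ : μ = hA.eigenvalues i₀ :=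
    le_antisymm (ciSup_le hi₀) (le_ciSup (Set.finite_range _).bddAbove i₀)
  set u : ι → ℝ := ⇑(hA.eigenvectorBasis i₀)
  have hu : A *ᵥ u = μ • u := hμ ▸ hA.mulVec_eigenvectorBasis i₀
  have hu0 : u ≠ 0 := fun h ↦
    hA.eigenvectorBasis.orthonormal.ne_zero i₀ (by ext j; exact congrFun h j)
  set z : ι → ℝ := fun i ↦ |u i|
  have hzz : z ⬝ᵥ z = u ⬝ᵥ u := by simp [z, dotProduct, abs_mul_abs_self]
  have huz : u ⬝ᵥ A *ᵥ u ≤ z ⬝ᵥ A *ᵥ z := by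
    simp only [dotProduct, mulVec, Finset.mul_sum]
    refine Finset.sum_le_sum fun i _ ↦ Finset.sum_le_sum fun j _ ↦ ?_
    calc u i * (A i j * u j) = A i j * (u i * u j) := by ring
      _ ≤ A i j * (z i * z j) :=
        mul_le_mul_of_nonneg_left ((le_abs_self _).trans (abs_mul _ _).le) (hA0 i j)
      _ = z i * (A i j * z j) := by ring
  have hMz : z ⬝ᵥ (μ • (1 : Matrix ι ι ℝ) - A) *ᵥ z = 0 := by
    refine le_antisymm ?_ (by simpa using hM.dotProduct_mulVec_nonneg z)
    rw [hMv, dotProduct_sub, dotProduct_smul, smul_eq_mul, hzz]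
    have : u ⬝ᵥ A *ᵥ u = μ * (u ⬝ᵥ u) := by rw [hu, dotProduct_smul, smul_eq_mul]
    linarith
  replace hMz := (hM.dotProduct_mulVec_zero_iff z).mp (by rwa [star_trivial])
  rw [hMv, sub_eq_zero] at hMz
  refine ⟨z, fun h ↦ hu0 ?_, fun i ↦ abs_nonneg _, hMz.symm⟩
  ext i
  simpa [z] using congrFun h i

lemma iSup_eigenvalues_eq_of_pos_of_mulVec_eq_smul [Nonempty ι] (hA : A.IsHermitian)
    (hA0 : ∀ i j, 0 ≤ A i j) {y : ι → ℝ} {μ : ℝ} (hy : ∀ i, 0 < y i) (hAy : A *ᵥ y = μ • y) :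
    ⨆ i, hA.eigenvalues i = μ := by
  obtain ⟨x, hx0, hxnn, hAx⟩ := hA.exists_nonneg_mulVec_eq_iSup_eigenvalues_smul hA0
  have hxy : 0 < x ⬝ᵥ y := by
    obtain ⟨i, hi⟩ := Function.ne_iff.mp hx0
    exact Finset.sum_pos' (fun j _ ↦ mul_nonneg (hxnn j) (hy j).le)
      ⟨i, Finset.mem_univ i, mul_pos (lt_of_le_of_ne (hxnn i) (Ne.symm hi)) (hy i)⟩
  refine mul_right_cancel₀ hxy.ne' ?_
  have hAT : Aᵀ = A := by simpa using hA.eq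
  calc (⨆ i, hA.eigenvalues i) * (x ⬝ᵥ y) = (A *ᵥ x) ⬝ᵥ y := by
        rw [hAx, smul_dotProduct, smul_eq_mul]
    _ = x ⬝ᵥ A *ᵥ y := by rw [← vecMul_transpose, hAT, dotProduct_mulVec]
    _ = μ * (x ⬝ᵥ y) := by rw [hAy, dotProduct_smul, smul_eq_mul]

end Matrix.IsHermitian

noncomputable def gapBound (N : ℝ) : ℝ := (N + 2 - √(N ^ 2 + 4 * N - 4)) / 2

lemma gapBound_spec {N : ℝ} (hN : 1 < N) :
    gapBound N * (N + 2 - gapBound N) = 2 ∧ 0 < gapBound N ∧ gapBound N < 1 := by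
  have hsq := Real.sq_sqrt (show 0 ≤ N ^ 2 + 4 * N - 4 by nlinarith)
  have hsq0 := Real.sqrt_nonneg (N ^ 2 + 4 * N - 4)
  unfold gapBound
  exact ⟨by linear_combination (-1 / 4 : ℝ) * hsq, by nlinarith, by nlinarith⟩

lemma le_of_le_mul_add_sub {N ε g δ Δ : ℝ} (hε : ε * (N + 2 - ε) = 2) (hε0 : 0 < ε)
    (hε1 : ε < 1) (hg : 0 < g) (h2 : 2 ≤ Δ) (hδΔ : δ ≤ Δ) (hΔ : Δ ≤ g * (N + δ - g)) : ε ≤ g := by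
  by_contra! hgε
  have hN : ε < N := by nlinarith
  have hquad : g * (N + 2 - g) < 2 := by nlinarith
  rcases le_total δ 2 with hδ2 | hδ2 <;> nlinarith

lemma eq_two_of_le_mul_add_sub {N ε δ Δ : ℝ} (hε : ε * (N + 2 - ε) = 2) (hε0 : 0 < ε)
    (hε1 : ε < 1) (h2 : 2 ≤ Δ) (hδΔ : δ ≤ Δ) (hΔ : Δ ≤ ε * (N + δ - ε)) : δ = 2 ∧ Δ = 2 := by
  obtain rfl : δ = 2 := by
    rcases lt_trichotomy δ 2 with hδ2 | hδ2 | hδ2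
    · nlinarith
    · exact hδ2
    · nlinarith
  exact ⟨rfl, by linarith⟩

section Graph

variable {n : ℕ}

lemma distMatrix_nonneg (G : SimpleGraph (Fin n)) (u v : Fin n) : 0 ≤ distMatrix G u v :=
  Nat.cast_nonneg _

lemma distMatrix_mulVec_apply (G : SimpleGraph (Fin n)) (x : Fin n → ℝ) (v : Fin n) :
    (distMatrix G *ᵥ x) v = ∑ u, (G.dist v u : ℝ) * x u := rfl

lemma sum_distMatrix_mulVec (G : SimpleGraph (Fin n)) (x : Fin n → ℝ) :
    ∑ v, (distMatrix G *ᵥ x) v = ∑ u, (transmission G u : ℝ) * x u := by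
  simp only [distMatrix_mulVec_apply, transmission, Nat.cast_sum, Finset.sum_mul]
  rw [Finset.sum_comm]
  simp_rw [SimpleGraph.dist_comm]

lemma even_sum_transmission (G : SimpleGraph (Fin n)) :
    Even (∑ v, transmission G v) := by
  have hsplit (v u : Fin n) : G.dist v u =
      (if v < u then G.dist v u else 0) + (if u < v then G.dist u v else 0) := by
    rcases lt_trichotomy v u with h | rfl | h
    · simp [h, h.not_gt]
    · simp
    · simp [h, h.not_gt, SimpleGraph.dist_comm]
  refine ⟨∑ v, ∑ u, if v < u then G.dist v u else 0, ?_⟩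
  simp_rw [transmission]
  conv_lhs => enter [2, v, 2, u]; rw [hsplit v u]
  simp_rw [Finset.sum_add_distrib]
  rw [Finset.sum_comm (f := fun v u ↦ if u < v then G.dist u v else 0)]

lemma transmission_le_Dmax (G : SimpleGraph (Fin n)) (v : Fin n) :
    (transmission G v : ℝ) ≤ Dmax G := by
  exact_mod_cast Finset.le_sup (Finset.mem_univ v)

lemma sub_transmission_le_sum (G : SimpleGraph (Fin n)) (t : Fin n) :
    (Dmax G : ℝ) - transmission G t ≤ ∑ v, ((Dmax G : ℝ) - transmission G v) :=
  Finset.single_le_sum (fun v _ ↦ sub_nonneg.mpr (transmission_le_Dmax G v)) (Finset.mem_univ t)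

lemma transmission_eq_Dmax_of_sum_eq {G : SimpleGraph (Fin n)} {t : Fin n}
    (h : ∑ v, ((Dmax G : ℝ) - transmission G v) = Dmax G - transmission G t) :
    ∀ v ≠ t, transmission G v = Dmax G := by
  intro v hv
  rw [← Finset.add_sum_erase _ _ (Finset.mem_univ t), add_eq_left,
    Finset.sum_eq_zero_iff_of_nonneg fun u _ ↦ sub_nonneg.mpr (transmission_le_Dmax G u)] at h
  exact_mod_cast (sub_eq_zero.mp (h v (Finset.mem_erase.mpr ⟨hv, Finset.mem_univ v⟩))).symm

lemma four_le_of_not_forall_transmission_eq (heven : Even n) {G : SimpleGraph (Fin n)}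
    (hntr : ¬ ∀ u v : Fin n, transmission G u = transmission G v) : 4 ≤ n := by
  obtain ⟨k, rfl⟩ := heven
  match k with
  | 0 => exact absurd (fun u ↦ u.elim0) hntr
  | 1 =>
    refine absurd (fun u v ↦ ?_) hntr
    fin_cases u <;> fin_cases v <;> simp [transmission, Fin.sum_univ_two, SimpleGraph.dist_comm]
  | k + 2 => omega

/-- `∑ (Dmax - Tr v) = n * Dmax - ∑ Tr v` is even, as `n` is even and `∑ Tr v` counts every
distance twice. -/
lemma two_le_sum_Dmax_sub_transmission (heven : Even n) {G : SimpleGraph (Fin n)}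
    (hntr : ¬ ∀ u v : Fin n, transmission G u = transmission G v) :
    2 ≤ ∑ v, ((Dmax G : ℝ) - transmission G v) := by
  have hle (v : Fin n) : transmission G v ≤ Dmax G := Finset.le_sup (Finset.mem_univ v)
  set Δ := ∑ v, (Dmax G - transmission G v)
  have hcast : (Δ : ℝ) = ∑ v, ((Dmax G : ℝ) - transmission G v) := by
    simp only [Δ, Nat.cast_sum, Nat.cast_sub (hle _)]
  have hsum : Δ + ∑ v, transmission G v = n * Dmax G := by
    simp [Δ, ← Finset.sum_add_distrib, Nat.sub_add_cancel (hle _)]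
  have hΔeven : Even Δ := by
    have := hsum ▸ heven.mul_right (Dmax G)
    exact (Nat.even_add.mp this).mpr (even_sum_transmission G)
  have hΔ0 : Δ ≠ 0 := by
    refine fun h ↦ hntr fun u v ↦ ?_
    have := Finset.sum_eq_zero_iff.mp h
    have hu := this u (Finset.mem_univ u)
    have hv := this v (Finset.mem_univ v)
    have := hle u
    have := hle v
    omega
  rw [← hcast]
  obtain ⟨k, hk⟩ := hΔeven
  exact_mod_cast (by omega : 2 ≤ Δ)

lemma dist_le_two_of_forall_adj {G : SimpleGraph (Fin n)} {t : Fin n}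
    (ht : ∀ u ≠ t, G.Adj t u) (w u : Fin n) : G.dist w u ≤ 2 := by
  by_cases hw : w = t
  · subst hw
    by_cases hu : u = w
    · simp [hu]
    · simp [SimpleGraph.dist_eq_one_iff_adj.mpr (ht u hu)]
  by_cases hu : u = t
  · subst hu
    simp [SimpleGraph.dist_eq_one_iff_adj.mpr (ht w hw).symm]
  exact (SimpleGraph.dist_le ((SimpleGraph.Walk.nil.cons (ht u hu)).cons (ht w hw).symm)).trans
    (by simp)

lemma transmission_add_ncard_neighborSet {G : SimpleGraph (Fin n)} (hG : G.Connected)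
    {w : Fin n} (hw : ∀ u, G.dist w u ≤ 2) :
    transmission G w + (G.neighborSet w).ncard = 2 * (n - 1) := by
  classical
  have hterm (u : Fin n) : G.dist w u + (if G.Adj w u then 1 else 0) = if u = w then 0 else 2 := by
    by_cases hu : u = w
    · simp [hu]
    by_cases ha : G.Adj w u
    · simp [hu, ha, SimpleGraph.dist_eq_one_iff_adj.mpr ha]
    · have h1 : G.dist w u ≠ 1 := fun h ↦ ha (SimpleGraph.dist_eq_one_iff_adj.mp h)
      have h0 := hG.pos_dist_of_ne (Ne.symm hu)
      have := hw u
      simp only [hu, ha, if_false]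
      omega
  have hdeg : (G.neighborSet w).ncard = ∑ u, if G.Adj w u then 1 else 0 := by
    rw [Finset.sum_boole, Set.ncard_eq_toFinset_card']
    congr 1
    ext u
    simp
  rw [hdeg, transmission, ← Finset.sum_add_distrib, Finset.sum_congr rfl fun u _ ↦ hterm u]
  simp [Finset.sum_ite, Finset.filter_ne', mul_comm]

lemma ncard_neighborSet_eq_sub_one_iff {G : SimpleGraph (Fin n)} {t : Fin n} :
    (G.neighborSet t).ncard = n - 1 ↔ ∀ u ≠ t, G.Adj t u := by
  have hcompl : ({t}ᶜ : Set (Fin n)).ncard = n - 1 := by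
    rw [Set.ncard_compl, Nat.card_eq_fintype_card, Fintype.card_fin, Set.ncard_singleton]
  have hsub : G.neighborSet t ⊆ {t}ᶜ := by rintro u hu rfl; exact G.irrefl hu
  constructor
  · intro h u hu
    have hu' : u ∈ ({t}ᶜ : Set (Fin n)) := hu
    rwa [← Set.eq_of_subset_of_ncard_le hsub (by rw [h, hcompl])] at hu'
  · intro h
    rw [← hcompl]
    exact congrArg Set.ncard (subset_antisymm hsub fun u hu ↦ h u hu)

lemma transmission_eq_of_forall_adj {G : SimpleGraph (Fin n)} (hG : G.Connected)
    {t : Fin n} (ht : ∀ u ≠ t, G.Adj t u) : transmission G t = n - 1 := by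
  have := transmission_add_ncard_neighborSet hG (dist_le_two_of_forall_adj ht t)
  rw [ncard_neighborSet_eq_sub_one_iff.mpr ht] at this
  omega

lemma ncard_induce_compl_singleton_neighborSet (G : SimpleGraph (Fin n)) {t : Fin n}
    (w : ({t}ᶜ : Set (Fin n))) :
    ((G.induce {t}ᶜ).neighborSet w).ncard = (G.neighborSet w \ {t}).ncard := by
  rw [← Set.ncard_preimage_of_injective_subset_range (s := G.neighborSet w \ {t})
    Subtype.val_injective fun u hu ↦ ⟨⟨u, hu.2⟩, rfl⟩]
  congr 1
  ext u
  simpa using fun _ ↦ Set.mem_compl_singleton_iff.mp u.2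

lemma isDVDR_iff {r : ℕ} {G : SimpleGraph (Fin n)} (hG : G.Connected) :
    IsDVDR G r ↔ ∃ t, (∀ u ≠ t, G.Adj t u) ∧ ∀ w ≠ t, (G.neighborSet w).ncard = r + 1 := by
  have hdeg {t w : Fin n} (ht : ∀ u ≠ t, G.Adj t u) (hw : w ≠ t) :
      (G.neighborSet w \ {t}).ncard = r ↔ (G.neighborSet w).ncard = r + 1 := by
    have hwt : t ∈ G.neighborSet w := (ht w hw).symm
    have := (Set.ncard_pos (Set.toFinite _)).mpr ⟨t, hwt⟩
    rw [Set.ncard_sdiff_singleton_of_mem hwt]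
    omega
  simp only [IsDVDR, hG, true_and, ncard_neighborSet_eq_sub_one_iff,
    ncard_induce_compl_singleton_neighborSet, Subtype.forall, Set.mem_compl_iff,
    Set.mem_singleton_iff]
  exact exists_congr fun t ↦ and_congr_right fun ht ↦ forall₂_congr fun w hw ↦ hdeg ht hw

lemma isDVDR_sub_four_iff {G : SimpleGraph (Fin n)} (hG : G.Connected) (hn : 4 ≤ n) :
    IsDVDR G (n - 4) ↔
      ∃ t, (∀ u ≠ t, G.Adj t u) ∧ ∀ w ≠ t, transmission G w = transmission G t + 2 := by
  rw [isDVDR_iff hG]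
  refine exists_congr fun t ↦ and_congr_right fun ht ↦ forall₂_congr fun w _ ↦ ?_
  have := transmission_add_ncard_neighborSet hG (dist_le_two_of_forall_adj ht w)
  have := transmission_eq_of_forall_adj hG ht
  omega

section EigenvectorMinimum

variable {G : SimpleGraph (Fin n)} {x : Fin n → ℝ} {μ : ℝ} {t : Fin n}

lemma sum_dist_sub_one_mul_sub_eq (hx : distMatrix G *ᵥ x = μ • x) (t : Fin n) :
    ∑ u, ((G.dist t u : ℝ) - 1) * (x u - x t) =
      (μ + n - transmission G t) * x t - ∑ u, x u := by
  have hμ : ∑ u, (G.dist t u : ℝ) * x u = μ * x t := by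
    rw [← distMatrix_mulVec_apply, hx, Pi.smul_apply, smul_eq_mul]
  simp only [sub_mul, mul_sub, Finset.sum_sub_distrib, one_mul, ← Finset.sum_mul, hμ,
    transmission, Nat.cast_sum, Finset.sum_const, Finset.card_univ, Fintype.card_fin,
    nsmul_eq_mul]
  ring

lemma dist_sub_one_mul_sub_nonneg (hG : G.Connected) (ht : ∀ u, x t ≤ x u) (u : Fin n) :
    0 ≤ ((G.dist t u : ℝ) - 1) * (x u - x t) := by
  rcases eq_or_ne u t with rfl | hu
  · simp
  have : (1 : ℝ) ≤ G.dist t u := by exact_mod_cast hG.pos_dist_of_ne hu.symm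
  exact mul_nonneg (by linarith) (by linarith [ht u])

lemma sum_le_of_forall_le (hG : G.Connected) (hx : distMatrix G *ᵥ x = μ • x)
    (ht : ∀ u, x t ≤ x u) : ∑ u, x u ≤ (μ + n - transmission G t) * x t := by
  have := Finset.sum_nonneg fun u (_ : u ∈ Finset.univ) ↦ dist_sub_one_mul_sub_nonneg hG ht u
  rw [sum_dist_sub_one_mul_sub_eq hx] at this
  linarith

lemma pos_of_forall_le (hG : G.Connected) (hx : distMatrix G *ᵥ x = μ • x) (hxnn : 0 ≤ x)
    (hx0 : x ≠ 0) (ht : ∀ u, x t ≤ x u) : 0 < x t := by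
  refine (hxnn t).lt_of_ne fun h ↦ ?_
  have hS : 0 < ∑ u, x u := by
    obtain ⟨i, hi⟩ := Function.ne_iff.mp hx0
    exact Finset.sum_pos' (fun j _ ↦ hxnn j) ⟨i, Finset.mem_univ i, (hxnn i).lt_of_ne' hi⟩
  have := sum_le_of_forall_le hG hx ht
  rw [← h, Pi.zero_apply, mul_zero] at this
  linarith

lemma sum_sub_transmission_mul_le (hx : distMatrix G *ᵥ x = μ • x) (ht : ∀ u, x t ≤ x u)
    {D : ℝ} (hD : ∀ v, (transmission G v : ℝ) ≤ D) :
    (∑ v, (D - transmission G v)) * x t ≤ (D - μ) * ∑ v, x v := by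
  have hμ : ∑ v, (transmission G v : ℝ) * x v = μ * ∑ v, x v := by
    rw [← sum_distMatrix_mulVec, hx, Finset.mul_sum]
    rfl
  have := Finset.sum_nonneg fun v (_ : v ∈ Finset.univ) ↦
    mul_nonneg (sub_nonneg.mpr (hD v)) (sub_nonneg.mpr (ht v))
  simp only [mul_sub, sub_mul, Finset.sum_sub_distrib, ← Finset.mul_sum, ← Finset.sum_mul,
    hμ, Finset.sum_const, nsmul_eq_mul] at this ⊢
  linarith

/-- If some vertex other than `t` also minimised `x`, the bound `sum_le_of_forall_le` at that
vertex would contradict equality at `t`; so `x u > x t` for `u ≠ t`, and equality in the sum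
forces `dist t u = 1`. -/
lemma adj_of_sum_eq (hG : G.Connected) (hx : distMatrix G *ᵥ x = μ • x) (ht : ∀ u, x t ≤ x u)
    (hxt : 0 < x t) (htr : ∀ v ≠ t, transmission G t < transmission G v)
    (hS : ∑ u, x u = (μ + n - transmission G t) * x t) : ∀ u ≠ t, G.Adj t u := by
  intro u hu
  have hlt : x t < x u := by
    refine (ht u).lt_of_ne fun h ↦ ?_
    have hu_min : ∀ v, x u ≤ x v := h ▸ ht
    have hle := sum_le_of_forall_le hG hx hu_min
    have htu : (transmission G t : ℝ) < transmission G u := by exact_mod_cast htr u hu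
    rw [← h] at hle
    nlinarith [mul_lt_mul_of_pos_right htu hxt]
  have hzero := (Finset.sum_eq_zero_iff_of_nonneg fun v (_ : v ∈ Finset.univ) ↦
    dist_sub_one_mul_sub_nonneg hG ht v).mp (by rw [sum_dist_sub_one_mul_sub_eq hx, hS]; ring)
    u (Finset.mem_univ u)
  rcases mul_eq_zero.mp hzero with h | h
  · exact SimpleGraph.dist_eq_one_iff_adj.mp (by exact_mod_cast sub_eq_zero.mp h)
  · linarith

lemma gap_pos_and_sum_le (hG : G.Connected) (hx : distMatrix G *ᵥ x = μ • x) (hxnn : 0 ≤ x)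
    (hx0 : x ≠ 0) (ht : ∀ u, x t ≤ x u) (hΔ : 0 < ∑ v, ((Dmax G : ℝ) - transmission G v)) :
    0 < Dmax G - μ ∧ ∑ v, ((Dmax G : ℝ) - transmission G v) ≤
      (Dmax G - μ) * (n + (Dmax G - transmission G t) - (Dmax G - μ)) := by
  have hxt := pos_of_forall_le hG hx hxnn hx0 ht
  have hS := sum_le_of_forall_le hG hx ht
  have hΔS := sum_sub_transmission_mul_le hx ht (transmission_le_Dmax G)
  have hS0 : 0 ≤ ∑ v, x v := Finset.sum_nonneg fun v _ ↦ hxnn v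
  have hg : 0 < (Dmax G : ℝ) - μ := by
    by_contra! hg
    nlinarith [mul_pos hΔ hxt, mul_nonneg (neg_nonneg.mpr hg) hS0]
  refine ⟨hg, le_of_mul_le_mul_right ?_ hxt⟩
  calc _ ≤ (Dmax G - μ) * ∑ v, x v := hΔS
    _ ≤ (Dmax G - μ) * ((μ + n - transmission G t) * x t) := by gcongr
    _ = _ := by ring

lemma adj_of_sum_eq_gap_mul (hG : G.Connected) (hx : distMatrix G *ᵥ x = μ • x) (hxnn : 0 ≤ x)
    (hx0 : x ≠ 0) (ht : ∀ u, x t ≤ x u) (hΔ : 0 < ∑ v, ((Dmax G : ℝ) - transmission G v))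
    (htr : ∀ v ≠ t, transmission G t < transmission G v)
    (heq : ∑ v, ((Dmax G : ℝ) - transmission G v) =
      (Dmax G - μ) * (n + (Dmax G - transmission G t) - (Dmax G - μ))) :
    ∀ u ≠ t, G.Adj t u := by
  have hg := (gap_pos_and_sum_le hG hx hxnn hx0 ht hΔ).1
  have hxt := pos_of_forall_le hG hx hxnn hx0 ht
  have hΔS := sum_sub_transmission_mul_le hx ht (transmission_le_Dmax G)
  refine adj_of_sum_eq hG hx ht hxt htr (le_antisymm (sum_le_of_forall_le hG hx ht) ?_)
  refine le_of_mul_le_mul_left ?_ hg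
  calc _ = (∑ v, ((Dmax G : ℝ) - transmission G v)) * x t := by rw [heq]; ring
    _ ≤ _ := hΔS

end EigenvectorMinimum

lemma lambda1_eq_of_forall_adj {G : SimpleGraph (Fin n)} (hG : G.Connected) (hn : 2 ≤ n)
    {t : Fin n} (ht : ∀ u ≠ t, G.Adj t u) (htr : ∀ w ≠ t, transmission G w = n + 1) :
    lambda1 G = (n + √((n : ℝ) ^ 2 + 4 * n - 4)) / 2 := by
  have : Nonempty (Fin n) := ⟨t⟩
  have hN : (2 : ℝ) ≤ n := by exact_mod_cast hn
  set ρ := (n + √((n : ℝ) ^ 2 + 4 * n - 4)) / 2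
  have hρ : ρ ^ 2 = n * ρ + (n - 1) := by
    linear_combination (1 / 4 : ℝ) * Real.sq_sqrt (show (0 : ℝ) ≤ n ^ 2 + 4 * n - 4 by nlinarith)
  have hρ0 : 0 < ρ := by positivity
  set y : Fin n → ℝ := fun w ↦ ρ + if w = t then n - 1 - ρ else 0
  have hy (w : Fin n) : 0 < y w := by
    by_cases hw : w = t <;> simp only [y, hw, if_true, if_false] <;> linarith
  refine (distMatrix_isHermitian G).iSup_eigenvalues_eq_of_pos_of_mulVec_eq_smul
    (distMatrix_nonneg G) hy (funext fun u ↦ ?_)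
  have hTr : ∑ w, (G.dist u w : ℝ) = transmission G u := by simp [transmission]
  simp only [distMatrix_mulVec_apply, y, mul_add, mul_ite, mul_zero, Finset.sum_add_distrib,
    Finset.sum_ite_eq', Finset.mem_univ, if_true, ← Finset.sum_mul, hTr, Pi.smul_apply,
    smul_eq_mul]
  by_cases hu : u = t
  · subst hu
    rw [transmission_eq_of_forall_adj hG ht, Nat.cast_sub (by omega)]
    simp
    ring
  · rw [htr u hu, SimpleGraph.dist_eq_one_iff_adj.mpr (ht u hu).symm]
    simp [hu]
    linear_combination -hρ

lemma Dmax_sub_lambda1_of_isDVDR {G : SimpleGraph (Fin n)} (hG : G.Connected)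
    (hn : 4 ≤ n) (hD : IsDVDR G (n - 4)) : (Dmax G : ℝ) - lambda1 G = gapBound n := by
  obtain ⟨t, ht, htr⟩ := (isDVDR_sub_four_iff hG hn).mp hD
  have htr' : ∀ w ≠ t, transmission G w = n + 1 := by
    intro w hw; rw [htr w hw, transmission_eq_of_forall_adj hG ht]; omega
  have : Nontrivial (Fin n) := Fin.nontrivial_iff_two_le.mpr (by omega)
  obtain ⟨w, hw⟩ := exists_ne t
  have hDmax : Dmax G = n + 1 := by
    refine le_antisymm (Finset.sup_le fun v _ ↦ ?_) (htr' w hw ▸ Finset.le_sup (Finset.mem_univ w))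
    rcases eq_or_ne v t with rfl | hv
    · rw [transmission_eq_of_forall_adj hG ht]; omega
    · exact (htr' v hv).le
  rw [hDmax, lambda1_eq_of_forall_adj hG (by omega) ht htr', gapBound]
  push_cast
  ring

end Graph

theorem stmt16 (n : ℕ) (heven : Even n) (G : SimpleGraph (Fin n)) (hG : G.Connected)
    (hntr : ¬ ∀ u v : Fin n, transmission G u = transmission G v) :
    ((n : ℝ) + 2 - Real.sqrt ((n : ℝ) ^ 2 + 4 * n - 4)) / 2
        ≤ (Dmax G : ℝ) - lambda1 G ∧
    ((Dmax G : ℝ) - lambda1 G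
        = ((n : ℝ) + 2 - Real.sqrt ((n : ℝ) ^ 2 + 4 * n - 4)) / 2
      ↔ IsDVDR G (n - 4)) := by
  have hn := four_le_of_not_forall_transmission_eq heven hntr
  have hN : (1 : ℝ) < n := by exact_mod_cast (by omega : 1 < n)
  have hΔ := two_le_sum_Dmax_sub_transmission heven hntr
  have : Nonempty (Fin n) := ⟨⟨0, by omega⟩⟩
  obtain ⟨x, hx0, hxnn, hx⟩ :=
    (distMatrix_isHermitian G).exists_nonneg_mulVec_eq_iSup_eigenvalues_smul (distMatrix_nonneg G)
  change distMatrix G *ᵥ x = lambda1 G • x at hx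
  obtain ⟨t, -, ht⟩ := Finset.univ.exists_min_image x Finset.univ_nonempty
  replace ht : ∀ u, x t ≤ x u := fun u ↦ ht u (Finset.mem_univ u)
  obtain ⟨hg, hbound⟩ := gap_pos_and_sum_le hG hx hxnn hx0 ht (by linarith)
  have hδΔ := sub_transmission_le_sum G t
  obtain ⟨hε, hε0, hε1⟩ := gapBound_spec hN
  change gapBound n ≤ _ ∧ (_ = gapBound n ↔ _)
  refine ⟨le_of_le_mul_add_sub hε hε0 hε1 hg hΔ hδΔ hbound, fun heq ↦ ?_,
    Dmax_sub_lambda1_of_isDVDR hG hn⟩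
  rw [heq] at hbound
  obtain ⟨hδ, hΔ2⟩ := eq_two_of_le_mul_add_sub hε hε0 hε1 hΔ hδΔ hbound
  have hmax := transmission_eq_Dmax_of_sum_eq (hΔ2.trans hδ.symm)
  have hδ' : Dmax G = transmission G t + 2 := by
    have : (Dmax G : ℝ) = transmission G t + 2 := by linarith
    exact_mod_cast this
  have hadj := adj_of_sum_eq_gap_mul hG hx hxnn hx0 ht (by linarith)
    (fun v hv ↦ by rw [hmax v hv]; omega) (by rw [hΔ2, hδ, heq, hε])
  exact (isDVDR_sub_four_iff hG hn).mpr ⟨t, hadj, fun w hw ↦ by rw [hmax w hw, hδ']⟩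
end

section
/- Let G be a connected non-transmission-regular graph on n ≥ 2 vertices. Then D_max(G) − λ₁(G) > 1/(n+1). -/
open SimpleGraph Matrix Finset BigOperators

-- core scalar inequality
lemma core_ineq (n a S : ℝ) (hn : 2 ≤ n)
    (h1 : (S - a)^2 ≤ (n-1)*(1-a^2)) :
    a^2 + (n - S^2) > 1/(n+1) := by
  have hq : (0:ℝ) < 2*n^3+2*n^2-6*n+2 := by nlinarith
  have hp : (0:ℝ) < 2*n^4+6*n^3-6*n+1 := by nlinarith
  have hu : (0:ℝ) < 2*n^3+4*n^2-2*n-1 := by nlinarith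
  have hc3 : (0:ℝ) ≤ 2*n^5+6*n^4-4*n^3-12*n^2+11*n-3 := by
    nlinarith [sq_nonneg n, sq_nonneg (n-2), sq_nonneg (n*(n-2))]
  have hC : 0 ≤ (n-1)*(1-a^2) - (S-a)^2 := by linarith
  rw [gt_iff_lt, div_lt_iff₀ (by linarith)]
  nlinarith [mul_nonneg (mul_nonneg hp.le hu.le) hC,
    sq_nonneg ((2*n^3+4*n^2-2*n-1)*(S-a) - (n+1)*(2*n^3+2*n^2-6*n+2)*a),
    mul_nonneg hc3 (sq_nonneg a), mul_pos hq hu]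

theorem stmt17 (n : ℕ) (hn : 2 ≤ n) (G : SimpleGraph (Fin n)) (hG : G.Connected)
    (hntr : ¬ ∀ u v : Fin n, transmission G u = transmission G v) :
    (Dmax G : ℝ) - lambda1 G > 1 / ((n : ℝ) + 1) := by
  classical
  have hA := distMatrix_isHermitian G
  have hn' : (2:ℝ) ≤ (n:ℝ) := by exact_mod_cast hn
  haveI : NeZero n := ⟨by omega⟩
  haveI : Nonempty (Fin n) := ⟨⟨0, by omega⟩⟩
  obtain ⟨k, -, hk⟩ := Finset.exists_max_image Finset.univ hA.eigenvalues
    ⟨Classical.arbitrary _, Finset.mem_univ _⟩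
  have hlam : lambda1 G = hA.eigenvalues k :=
    le_antisymm (ciSup_le fun i => hk i (Finset.mem_univ i))
      (le_ciSup (Set.Finite.bddAbove (Set.finite_range _)) k)
  set v : Fin n → ℝ := fun i => hA.eigenvectorBasis k i with hv
  have hnorm : ∑ i, v i ^ 2 = 1 := by
    have h1 : ‖hA.eigenvectorBasis k‖ = 1 := hA.eigenvectorBasis.orthonormal.1 k
    have h2 := EuclideanSpace.norm_eq (hA.eigenvectorBasis k)
    rw [h1] at h2
    have h3 : ∑ i, ‖hA.eigenvectorBasis k i‖^2 = 1 := by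
      have h4 : (0:ℝ) ≤ ∑ i, ‖hA.eigenvectorBasis k i‖^2 :=
        Finset.sum_nonneg fun i _ => sq_nonneg _
      nlinarith [Real.sq_sqrt h4]
    simpa [hv, Real.norm_eq_abs, sq_abs] using h3
  have heig : ∀ i, ∑ j, (G.dist i j : ℝ) * v j = hA.eigenvalues k * v i := by
    intro i
    have h := congrFun (hA.mulVec_eigenvectorBasis k) i
    simpa [Matrix.mulVec, dotProduct, distMatrix, hv] using h

  set T : Fin n → ℝ := fun i => (transmission G i : ℝ) with hTdef
  set D : ℝ := (Dmax G : ℝ) with hD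
  set S : ℝ := ∑ i, v i with hS
  have hT : ∀ i, ∑ j, (G.dist i j : ℝ) = T i := by
    intro i; simp [hTdef, transmission]
  have hdsymm : ∀ i j : Fin n, (G.dist i j : ℝ) = (G.dist j i : ℝ) := by
    intro i j; rw [SimpleGraph.dist_comm]
  -- Q = lambda
  have hQ : ∑ i, ∑ j, (G.dist i j : ℝ) * v i * v j = hA.eigenvalues k := by
    calc ∑ i, ∑ j, (G.dist i j : ℝ) * v i * v j
        = ∑ i, v i * ∑ j, (G.dist i j : ℝ) * v j := by
          refine Finset.sum_congr rfl fun i _ => ?_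
          rw [Finset.mul_sum]
          exact Finset.sum_congr rfl fun j _ => by ring
      _ = ∑ i, v i * (hA.eigenvalues k * v i) := by
          refine Finset.sum_congr rfl fun i _ => by rw [heig i]
      _ = hA.eigenvalues k * ∑ i, v i ^ 2 := by
          rw [Finset.mul_sum]; exact Finset.sum_congr rfl fun i _ => by ring
      _ = hA.eigenvalues k := by rw [hnorm, mul_one]
  -- Laplacian identity
  have P1 : ∑ i, ∑ j, (G.dist i j : ℝ) * (v i - v j)^2
      = 2 * (∑ i, T i * v i ^ 2) - 2 * (∑ i, ∑ j, (G.dist i j : ℝ) * v i * v j) := by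
    have e1 : ∑ i, ∑ j, (G.dist i j : ℝ) * v i ^ 2 = ∑ i, T i * v i ^ 2 := by
      refine Finset.sum_congr rfl fun i _ => ?_
      rw [← Finset.sum_mul, hT]
    have e2 : ∑ i, ∑ j, (G.dist i j : ℝ) * v j ^ 2 = ∑ i, T i * v i ^ 2 := by
      rw [Finset.sum_comm]
      refine Finset.sum_congr rfl fun j _ => ?_
      rw [← Finset.sum_mul]
      congr 1
      rw [← hT j]
      exact Finset.sum_congr rfl fun i _ => hdsymm i j
    calc ∑ i, ∑ j, (G.dist i j : ℝ) * (v i - v j)^2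
        = ∑ i, ∑ j, ((G.dist i j : ℝ) * v i ^ 2 + (G.dist i j : ℝ) * v j ^ 2
            - 2 * ((G.dist i j : ℝ) * v i * v j)) := by
          refine Finset.sum_congr rfl fun i _ => Finset.sum_congr rfl fun j _ => by ring
      _ = (∑ i, ∑ j, (G.dist i j : ℝ) * v i ^ 2) + (∑ i, ∑ j, (G.dist i j : ℝ) * v j ^ 2)
            - 2 * (∑ i, ∑ j, (G.dist i j : ℝ) * v i * v j) := by
          simp only [Finset.sum_sub_distrib, Finset.sum_add_distrib, Finset.mul_sum]
      _ = _ := by rw [e1, e2]; ring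
  -- lower bound on the Laplacian form
  have P2 : 2 * (n:ℝ) - 2 * S^2 ≤ ∑ i, ∑ j, (G.dist i j : ℝ) * (v i - v j)^2 := by
    have step : ∑ i, ∑ j, (v i - v j)^2 ≤ ∑ i, ∑ j, (G.dist i j : ℝ) * (v i - v j)^2 := by
      refine Finset.sum_le_sum fun i _ => Finset.sum_le_sum fun j _ => ?_
      rcases eq_or_ne i j with rfl | hne
      · simp
      · have h1 : 1 ≤ (G.dist i j : ℝ) := by
          exact_mod_cast hG.pos_dist_of_ne hne
        nlinarith [sq_nonneg (v i - v j)]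
    have idsum : ∑ i, ∑ j, (v i - v j)^2 = 2 * (n:ℝ) - 2 * S^2 := by
      have inner_id : ∀ i : Fin n, ∑ j, (v i - v j)^2 = (n:ℝ) * v i ^ 2 - 2 * v i * S + 1 := by
        intro i
        calc ∑ j, (v i - v j)^2 = ∑ j, (v i ^ 2 - 2 * (v i * v j) + v j ^ 2) := by
              refine Finset.sum_congr rfl fun j _ => by ring
          _ = (∑ _j : Fin n, v i ^ 2) - 2 * (v i * ∑ j, v j) + ∑ j, v j ^ 2 := by
              simp only [Finset.sum_sub_distrib, Finset.sum_add_distrib, Finset.mul_sum]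
          _ = (n:ℝ) * v i ^ 2 - 2 * v i * S + 1 := by
              rw [Finset.sum_const, Finset.card_univ, Fintype.card_fin, hnorm, ← hS]
              push_cast; ring
      calc ∑ i, ∑ j, (v i - v j)^2 = ∑ i, ((n:ℝ) * v i ^ 2 - 2 * v i * S + 1) := by
            exact Finset.sum_congr rfl fun i _ => inner_id i
        _ = (n:ℝ) * (∑ i, v i ^ 2) - 2 * S * S + (n:ℝ) := by
            rw [Finset.sum_add_distrib, Finset.sum_sub_distrib, ← Finset.mul_sum,
              Finset.sum_const, Finset.card_univ, Fintype.card_fin,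
              show ∑ i, 2 * v i * S = 2 * S * ∑ i, v i by
                rw [Finset.mul_sum]; exact Finset.sum_congr rfl fun i _ => by ring, ← hS]
            push_cast; ring
        _ = 2 * (n:ℝ) - 2 * S^2 := by rw [hnorm]; ring
    linarith

  -- the vertex of minimum transmission
  obtain ⟨i0, -, hi0⟩ := Finset.exists_min_image Finset.univ (transmission G)
    ⟨Classical.arbitrary _, Finset.mem_univ _⟩
  have hub : ∀ a, transmission G a ≤ Dmax G := fun a => Finset.le_sup (Finset.mem_univ a)
  have hDT : ∀ i, T i ≤ D := by
    intro i
    show (transmission G i : ℝ) ≤ (Dmax G : ℝ)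
    exact_mod_cast hub i
  have hi0lt : transmission G i0 < Dmax G := by
    rcases lt_or_eq_of_le (hub i0) with h | h
    · exact h
    · exfalso
      apply hntr
      intro a b
      have ha := hub a
      have hb := hub b
      have ha' := hi0 a (Finset.mem_univ a)
      have hb' := hi0 b (Finset.mem_univ b)
      omega
  have hone : T i0 + 1 ≤ D := by
    have h : transmission G i0 + 1 ≤ Dmax G := hi0lt
    show (transmission G i0 : ℝ) + 1 ≤ (Dmax G : ℝ)
    exact_mod_cast h
  -- P3 : diagonal part bound
  have P3 : v i0 ^ 2 ≤ ∑ i, (D - T i) * v i ^ 2 := by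
    have h1 : (D - T i0) * v i0 ^ 2 ≤ ∑ i, (D - T i) * v i ^ 2 :=
      Finset.single_le_sum (f := fun i => (D - T i) * v i ^ 2)
        (fun i _ => mul_nonneg (by linarith [hDT i]) (sq_nonneg _)) (Finset.mem_univ i0)
    nlinarith [sq_nonneg (v i0)]
  -- P4 : diagonal part identity
  have P4 : ∑ i, (D - T i) * v i ^ 2 = D - ∑ i, T i * v i ^ 2 := by
    calc ∑ i, (D - T i) * v i ^ 2 = ∑ i, (D * v i ^ 2 - T i * v i ^ 2) := by
          exact Finset.sum_congr rfl fun i _ => by ring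
      _ = D * (∑ i, v i ^ 2) - ∑ i, T i * v i ^ 2 := by
          rw [Finset.sum_sub_distrib, ← Finset.mul_sum]
      _ = D - ∑ i, T i * v i ^ 2 := by rw [hnorm, mul_one]
  -- Cauchy-Schwarz
  have hCS : (S - v i0)^2 ≤ ((n:ℝ) - 1) * (1 - v i0 ^ 2) := by
    have h1 := Finset.sum_mul_sq_le_sq_mul_sq (Finset.univ.erase i0) (fun _ => (1:ℝ)) v
    have h2 : ∑ j ∈ Finset.univ.erase i0, (1:ℝ) * v j = S - v i0 := by
      simp only [one_mul]
      rw [Finset.sum_erase_eq_sub (Finset.mem_univ i0), ← hS]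
    have h3 : ∑ j ∈ Finset.univ.erase i0, v j ^ 2 = 1 - v i0 ^ 2 := by
      rw [Finset.sum_erase_eq_sub (Finset.mem_univ i0), hnorm]
    have h4 : ∑ _j ∈ Finset.univ.erase i0, (1:ℝ) ^ 2 = (n:ℝ) - 1 := by
      rw [Finset.sum_const, Finset.card_erase_of_mem (Finset.mem_univ i0),
        Finset.card_univ, Fintype.card_fin]
      have h5 : (1:ℕ) ≤ n := by omega
      rw [nsmul_eq_mul, Nat.cast_sub h5]
      push_cast
      ring
    rw [h2, h3, h4] at h1
    exact h1
  -- assemble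
  have hfinal := core_ineq (n:ℝ) (v i0) S hn' (by nlinarith [hCS])
  have hmain : v i0 ^ 2 + ((n:ℝ) - S^2) ≤ D - hA.eigenvalues k := by
    have := hQ
    linarith [P1, P2, P3, P4, hQ]
  rw [hlam]
  calc 1 / ((n:ℝ) + 1) < v i0 ^ 2 + ((n:ℝ) - S^2) := hfinal
    _ ≤ (Dmax G : ℝ) - hA.eigenvalues k := hmain
end
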